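/- arXiv:2602.08742 — 9 statements merged into one kernel-verified Lean document; each statement's English description precedes it below -/
import Mathlib

section
/- Consider the single-attribute Nash nearest neighbor setting in which every vector has similarity 1, i.e., s(v) = 1 for all v ∈ P, every class D_ℓ is nonempty, and the number of attributes satisfies c ≥ k, with |P| ≥ k. Then every size-k subset S* ⊆ P that maximizes NSW over all size-k subsets of P satisfies |S* ∩ D_ℓ| ≤ 1 for every attribute ℓ ∈ {1,…,c}. -/
/-- Utility of attribute `ℓ` under selection `S`: cumulative similarity of the
vectors in `S` with attribute `ℓ`. -/
noncomputable def utility {V : Type*} [DecidableEq V] {c : ℕ}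
    (D : Fin c → Finset V) (s : V → ℝ) (S : Finset V) (ℓ : Fin c) : ℝ :=
  ∑ v ∈ S ∩ D ℓ, s v

/-- Nash social welfare of a selection `S` with smoothing constant `η`. -/
noncomputable def NSW {V : Type*} [DecidableEq V] {c : ℕ}
    (D : Fin c → Finset V) (s : V → ℝ) (η : ℝ) (S : Finset V) : ℝ :=
  (∏ ℓ, (utility D s S ℓ + η)) ^ ((1 : ℝ) / c)

/-- Complete diversity via NaNNS: if all similarities equal 1, every class is
nonempty and `c ≥ k`, then any NSW-maximizing size-`k` subset contains at most
one vector of each attribute. -/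
theorem complete_diversity {V : Type*} [DecidableEq V] (c k : ℕ) (hc : 1 ≤ c)
    (P : Finset V) (D : Fin c → Finset V)
    (hsub : ∀ ℓ, D ℓ ⊆ P)
    (hdisj : ∀ ℓ ℓ' : Fin c, ℓ ≠ ℓ' → Disjoint (D ℓ) (D ℓ'))
    (hcov : ∀ v ∈ P, ∃ ℓ, v ∈ D ℓ)
    (s : V → ℝ) (hs1 : ∀ v ∈ P, s v = 1)
    (η : ℝ) (hη : 0 < η)
    (hne : ∀ ℓ, (D ℓ).Nonempty)
    (hck : k ≤ c) (hPk : k ≤ P.card)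
    (Sstar : Finset V) (hSsub : Sstar ⊆ P) (hScard : Sstar.card = k)
    (hmax : ∀ T ⊆ P, T.card = k → NSW D s η T ≤ NSW D s η Sstar) :
    ∀ ℓ : Fin c, (Sstar ∩ D ℓ).card ≤ 1 := by
  by_contra h
  push_neg at h
  obtain ⟨ℓ₀, hℓ₀⟩ := h
  -- sum of intersection cards is at most k
  have hsum : ∑ ℓ : Fin c, (Sstar ∩ D ℓ).card ≤ k := by
    calc ∑ ℓ : Fin c, (Sstar ∩ D ℓ).card
        = (Finset.univ.biUnion (fun ℓ => Sstar ∩ D ℓ)).card := by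
          rw [Finset.card_biUnion]
          intro x _ y _ hxy
          exact (hdisj x y hxy).mono Finset.inter_subset_right Finset.inter_subset_right
      _ ≤ Sstar.card := Finset.card_le_card (by
          intro a ha
          simp only [Finset.mem_biUnion] at ha
          obtain ⟨ℓ, _, ha⟩ := ha
          exact (Finset.mem_inter.mp ha).1)
      _ = k := hScard
  -- there is a class missing from Sstar
  have hex : ∃ ℓ₁ : Fin c, (Sstar ∩ D ℓ₁).card = 0 := by
    by_contra hno
    push_neg at hno
    have h1 : ∀ ℓ : Fin c, 1 ≤ (Sstar ∩ D ℓ).card :=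
      fun ℓ => Nat.one_le_iff_ne_zero.mpr (hno ℓ)
    have hlt : ∑ ℓ : Fin c, 1 < ∑ ℓ : Fin c, (Sstar ∩ D ℓ).card :=
      Finset.sum_lt_sum (fun i _ => h1 i) ⟨ℓ₀, Finset.mem_univ _, hℓ₀⟩
    simp only [Finset.sum_const, Finset.card_univ, Fintype.card_fin, smul_eq_mul,
      mul_one] at hlt
    omega
  obtain ⟨ℓ₁, hℓ₁⟩ := hex
  have hempty : Sstar ∩ D ℓ₁ = ∅ := Finset.card_eq_zero.mp hℓ₁
  have hne01 : ℓ₀ ≠ ℓ₁ := by intro hEq; rw [hEq] at hℓ₀; omega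
  obtain ⟨v, hv1⟩ := hne ℓ₁
  have hvP : v ∈ P := hsub ℓ₁ hv1
  have hvS : v ∉ Sstar := by
    intro hvS
    have : v ∈ Sstar ∩ D ℓ₁ := Finset.mem_inter.mpr ⟨hvS, hv1⟩
    simp [hempty] at this
  obtain ⟨w, hw⟩ := Finset.card_pos.mp (by omega : 0 < (Sstar ∩ D ℓ₀).card)
  have hwS : w ∈ Sstar := (Finset.mem_inter.mp hw).1
  have hw0 : w ∈ D ℓ₀ := (Finset.mem_inter.mp hw).2
  have hk2 : 2 ≤ k := by
    have := Finset.card_le_card (Finset.inter_subset_left (s₂ := D ℓ₀) (s₁ := Sstar))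
    omega
  set T : Finset V := insert v (Sstar.erase w) with hT
  have hvne : v ∉ Sstar.erase w := fun hx => hvS (Finset.mem_of_mem_erase hx)
  have hTsub : T ⊆ P := by
    intro x hx
    rcases Finset.mem_insert.mp hx with rfl | hx
    · exact hvP
    · exact hSsub (Finset.mem_of_mem_erase hx)
  have hTcard : T.card = k := by
    rw [hT, Finset.card_insert_of_notMem hvne, Finset.card_erase_of_mem hwS, hScard]
    omega
  -- utilities are cardinalities
  have hutil : ∀ (S : Finset V), S ⊆ P → ∀ ℓ, utility D s S ℓ = (S ∩ D ℓ).card := by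
    intro S hS ℓ
    unfold utility
    rw [Finset.sum_congr rfl (fun x hx => hs1 x (hS (Finset.mem_inter.mp hx).1))]
    simp
  have hdnot : ∀ (x : V) (a b : Fin c), x ∈ D a → a ≠ b → x ∉ D b :=
    fun x a b hx hab => Finset.disjoint_left.mp (hdisj a b hab) hx
  -- intersection computations
  have hT1 : T ∩ D ℓ₁ = {v} := by
    ext x
    simp only [hT, Finset.mem_inter, Finset.mem_insert, Finset.mem_erase,
      Finset.mem_singleton]
    constructor
    · rintro ⟨hx1 | ⟨hxw, hxS⟩, hx2⟩
      · exact hx1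
      · exact absurd (Finset.mem_inter.mpr ⟨hxS, hx2⟩) (by simp [hempty])
    · rintro rfl; exact ⟨Or.inl rfl, hv1⟩
  have hv0 : v ∉ D ℓ₀ := hdnot v ℓ₁ ℓ₀ hv1 (Ne.symm hne01)
  have hT0 : T ∩ D ℓ₀ = (Sstar ∩ D ℓ₀).erase w := by
    ext x
    simp only [hT, Finset.mem_inter, Finset.mem_insert, Finset.mem_erase]
    constructor
    · rintro ⟨hx1 | ⟨hxw, hxS⟩, hx2⟩
      · exact absurd hx2 (hx1 ▸ hv0)
      · exact ⟨hxw, hxS, hx2⟩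
    · rintro ⟨hxw, hxS, hx2⟩; exact ⟨Or.inr ⟨hxw, hxS⟩, hx2⟩
  have hTother : ∀ ℓ : Fin c, ℓ ≠ ℓ₀ → ℓ ≠ ℓ₁ → T ∩ D ℓ = Sstar ∩ D ℓ := by
    intro ℓ h0 h1
    have hvℓ : v ∉ D ℓ := hdnot v ℓ₁ ℓ hv1 (Ne.symm h1)
    have hwℓ : w ∉ D ℓ := hdnot w ℓ₀ ℓ hw0 (Ne.symm h0)
    ext x
    simp only [hT, Finset.mem_inter, Finset.mem_insert, Finset.mem_erase]
    constructor
    · rintro ⟨hx1 | ⟨hxw, hxS⟩, hx2⟩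
      · exact absurd hx2 (hx1 ▸ hvℓ)
      · exact ⟨hxS, hx2⟩
    · rintro ⟨hxS, hx2⟩
      refine ⟨Or.inr ⟨?_, hxS⟩, hx2⟩
      rintro rfl; exact hwℓ hx2
  set m : ℕ := (Sstar ∩ D ℓ₀).card with hm
  -- factors
  set F : Fin c → ℝ := fun ℓ => utility D s Sstar ℓ + η with hF
  set G : Fin c → ℝ := fun ℓ => utility D s T ℓ + η with hG
  have hFpos : ∀ ℓ, 0 < F ℓ := by
    intro ℓ
    rw [hF]; dsimp only
    rw [hutil Sstar hSsub]
    positivity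
  have hGpos : ∀ ℓ, 0 < G ℓ := by
    intro ℓ
    rw [hG]; dsimp only
    rw [hutil T hTsub]
    positivity
  have hmem1 : ℓ₁ ∈ Finset.univ.erase ℓ₀ := by
    simp [Finset.mem_erase, Ne.symm hne01]
  have key : ∏ ℓ, F ℓ < ∏ ℓ, G ℓ := by
    rw [← Finset.mul_prod_erase _ F (Finset.mem_univ ℓ₀),
        ← Finset.mul_prod_erase _ F hmem1,
        ← Finset.mul_prod_erase _ G (Finset.mem_univ ℓ₀),
        ← Finset.mul_prod_erase _ G hmem1]
    have hrest : ∏ ℓ ∈ (Finset.univ.erase ℓ₀).erase ℓ₁, F ℓ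
        = ∏ ℓ ∈ (Finset.univ.erase ℓ₀).erase ℓ₁, G ℓ := by
      refine Finset.prod_congr rfl (fun ℓ hℓ => ?_)
      simp only [Finset.mem_erase] at hℓ
      rw [hF, hG]; dsimp only
      rw [hutil Sstar hSsub, hutil T hTsub, hTother ℓ hℓ.2.1 hℓ.1]
    rw [hrest]
    have hR : 0 < ∏ ℓ ∈ (Finset.univ.erase ℓ₀).erase ℓ₁, G ℓ :=
      Finset.prod_pos (fun ℓ _ => hGpos ℓ)
    have hF0 : F ℓ₀ = (m : ℝ) + η := by rw [hF]; dsimp only; rw [hutil Sstar hSsub]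
    have hF1 : F ℓ₁ = η := by
      rw [hF]; dsimp only; rw [hutil Sstar hSsub, hℓ₁]; simp
    have hG0 : G ℓ₀ = (m : ℝ) - 1 + η := by
      rw [hG]; dsimp only
      rw [hutil T hTsub, hT0, Finset.card_erase_of_mem hw]
      rw [Nat.cast_sub (by omega : 1 ≤ m)]
      simp
    have hG1 : G ℓ₁ = 1 + η := by
      rw [hG]; dsimp only; rw [hutil T hTsub, hT1]; simp
    rw [hF0, hF1, hG0, hG1]
    have hm2 : (2 : ℝ) ≤ (m : ℝ) := by exact_mod_cast hℓ₀
    nlinarith [mul_pos hR (show (0:ℝ) < (m:ℝ) - 1 by linarith)]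
  -- conclude
  have hcpos : (0 : ℝ) < 1 / c := by
    have : (0 : ℝ) < c := by exact_mod_cast hc
    positivity
  have hNSW : NSW D s η Sstar < NSW D s η T := by
    unfold NSW
    exact Real.rpow_lt_rpow (le_of_lt (Finset.prod_pos (fun ℓ _ => hFpos ℓ))) key hcpos
  exact absurd (hmax T hTsub hTcard) (not_le.mpr hNSW)
end

section
/- Let k ≥ 1 and c ≥ 1, and for each ℓ ∈ {1,…,c} let F_ℓ : {0,1,…,k} → ℝ have nonincreasing marginals, i.e., F_ℓ(i') − F_ℓ(i'−1) ≥ F_ℓ(i) − F_ℓ(i−1) whenever 1 ≤ i' < i ≤ k. Suppose nonnegative integers k_1, …, k_c with ∑_ℓ k_ℓ = k are swap-stable: for all x ≠ y with k_x ≥ 1 and k_y ≤ k − 1, F_x(k_x) − F_x(k_x−1) ≥ F_y(k_y+1) − F_y(k_y). Then (k_1,…,k_c) maximizes the separable objective: for every tuple of nonnegative integers m_1, …, m_c with each m_ℓ ≤ k and ∑_ℓ m_ℓ = k, it holds that ∑_{ℓ=1}^c F_ℓ(k_ℓ) ≥ ∑_{ℓ=1}^c F_ℓ(m_ℓ). 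-/
lemma sum_split_two {M : Type*} [AddCommMonoid M] {c : ℕ} (f : Fin c → M)
    (x y : Fin c) (hxy : x ≠ y) :
    ∑ ℓ, f ℓ = f x + f y + ∑ ℓ ∈ (Finset.univ.erase x).erase y, f ℓ := by
  rw [← Finset.add_sum_erase _ f (Finset.mem_univ x),
    ← Finset.add_sum_erase _ f
      (Finset.mem_erase.mpr ⟨hxy.symm, Finset.mem_univ y⟩), ← add_assoc]

/-- Exchange-argument core of the optimality of greedy Nash-ANN: a
swap-stable allocation `kk` of `k` selections across `c` classes maximizes a
separable objective with nonincreasing marginals. -/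
theorem swap_stable_maximizes (k c : ℕ) (hk : 1 ≤ k) (hc : 1 ≤ c)
    (F : Fin c → ℕ → ℝ)
    (hmarg : ∀ ℓ : Fin c, ∀ i' i, 1 ≤ i' → i' < i → i ≤ k →
      F ℓ i - F ℓ (i - 1) ≤ F ℓ i' - F ℓ (i' - 1))
    (kk : Fin c → ℕ) (hsum : ∑ ℓ, kk ℓ = k)
    (hstable : ∀ x y : Fin c, x ≠ y → 1 ≤ kk x → kk y ≤ k - 1 →
      F y (kk y + 1) - F y (kk y) ≤ F x (kk x) - F x (kk x - 1))
    (m : Fin c → ℕ) (hm : ∀ ℓ, m ℓ ≤ k) (hmsum : ∑ ℓ, m ℓ = k) :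
    ∑ ℓ, F ℓ (m ℓ) ≤ ∑ ℓ, F ℓ (kk ℓ) := by
  have hkk_le : ∀ ℓ, kk ℓ ≤ k := by
    intro ℓ
    rw [← hsum]
    exact Finset.single_le_sum (fun i _ => Nat.zero_le _) (Finset.mem_univ ℓ)
  suffices h : ∀ n : ℕ, ∀ m : Fin c → ℕ, (∀ ℓ, m ℓ ≤ k) → ∑ ℓ, m ℓ = k →
      ∑ ℓ, (kk ℓ - m ℓ) ≤ n → ∑ ℓ, F ℓ (m ℓ) ≤ ∑ ℓ, F ℓ (kk ℓ) by
    exact h (∑ ℓ, (kk ℓ - m ℓ)) m hm hmsum le_rfl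
  intro n
  induction n with
  | zero =>
    intro m hm hmsum hle
    have hall : ∀ ℓ, kk ℓ ≤ m ℓ := by
      intro ℓ
      have : kk ℓ - m ℓ = 0 := by
        have h1 : kk ℓ - m ℓ ≤ ∑ ℓ, (kk ℓ - m ℓ) :=
          Finset.single_le_sum (f := fun ℓ => kk ℓ - m ℓ)
            (fun i _ => Nat.zero_le _) (Finset.mem_univ ℓ)
        omega
      omega
    have heq : ∀ ℓ, m ℓ = kk ℓ := by
      have hsums : ∑ ℓ, kk ℓ = ∑ ℓ, m ℓ := by rw [hsum, hmsum]
      intro ℓ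
      have := (Finset.sum_eq_sum_iff_of_le (fun i _ => hall i)).mp hsums ℓ (Finset.mem_univ ℓ)
      omega
    exact le_of_eq (Finset.sum_congr rfl (fun ℓ _ => by rw [heq ℓ]))
  | succ n ih =>
    intro m hm hmsum hle
    by_cases hall : ∀ ℓ, kk ℓ ≤ m ℓ
    · have hsums : ∑ ℓ, kk ℓ = ∑ ℓ, m ℓ := by rw [hsum, hmsum]
      have heq : ∀ ℓ, m ℓ = kk ℓ := by
        intro ℓ
        have := (Finset.sum_eq_sum_iff_of_le (fun i _ => hall i)).mp hsums ℓ (Finset.mem_univ ℓ)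
        omega
      exact le_of_eq (Finset.sum_congr rfl (fun ℓ _ => by rw [heq ℓ]))
    · push_neg at hall
      obtain ⟨x, hx⟩ := hall
      have hy : ∃ y, kk y < m y := by
        by_contra hno
        push_neg at hno
        have : ∑ ℓ, m ℓ < ∑ ℓ, kk ℓ :=
          Finset.sum_lt_sum (fun i _ => hno i) ⟨x, Finset.mem_univ x, hx⟩
        omega
      obtain ⟨y, hy⟩ := hy
      have hxy : x ≠ y := by
        intro h; rw [h] at hx; omega
      set m' : Fin c → ℕ := Function.update (Function.update m x (m x + 1)) y (m y - 1) with hm'def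
      have hm'x : m' x = m x + 1 := by
        rw [hm'def, Function.update_of_ne hxy, Function.update_self]
      have hm'y : m' y = m y - 1 := by
        rw [hm'def, Function.update_self]
      have hm'other : ∀ ℓ, ℓ ≠ x → ℓ ≠ y → m' ℓ = m ℓ := by
        intro ℓ h1 h2
        rw [hm'def, Function.update_of_ne h2, Function.update_of_ne h1]
      -- split sums
      have hsplit : ∀ g : Fin c → ℕ → ℝ, ∀ f : Fin c → ℕ,
          ∑ ℓ, g ℓ (f ℓ) = g x (f x) + g y (f y) +
            ∑ ℓ ∈ (Finset.univ.erase x).erase y, g ℓ (f ℓ) :=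
        fun g f => sum_split_two (fun ℓ => g ℓ (f ℓ)) x y hxy
      -- m' properties
      have hm'le : ∀ ℓ, m' ℓ ≤ k := by
        intro ℓ
        by_cases h1 : ℓ = x
        · subst h1; rw [hm'x]; have := hkk_le ℓ; omega
        by_cases h2 : ℓ = y
        · subst h2; rw [hm'y]; have := hm ℓ; omega
        · rw [hm'other ℓ h1 h2]; exact hm ℓ
      have hm'sum : ∑ ℓ, m' ℓ = k := by
        have e1 : ∑ ℓ, m' ℓ = m' x + m' y + ∑ ℓ ∈ (Finset.univ.erase x).erase y, m' ℓ :=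
          sum_split_two m' x y hxy
        have e2 : ∑ ℓ, m ℓ = m x + m y + ∑ ℓ ∈ (Finset.univ.erase x).erase y, m ℓ :=
          sum_split_two m x y hxy
        have e3 : ∑ ℓ ∈ (Finset.univ.erase x).erase y, m' ℓ =
            ∑ ℓ ∈ (Finset.univ.erase x).erase y, m ℓ := by
          apply Finset.sum_congr rfl
          intro ℓ hℓ
          simp only [Finset.mem_erase] at hℓ
          exact hm'other ℓ hℓ.2.1 hℓ.1
        rw [e1, hm'x, hm'y, e3]
        omega
      have hdec : ∑ ℓ, (kk ℓ - m' ℓ) ≤ n := by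
        have e1 : ∑ ℓ, (kk ℓ - m' ℓ) = (kk x - m' x) + (kk y - m' y) +
            ∑ ℓ ∈ (Finset.univ.erase x).erase y, (kk ℓ - m' ℓ) :=
          sum_split_two (fun ℓ => kk ℓ - m' ℓ) x y hxy
        have e2 : ∑ ℓ, (kk ℓ - m ℓ) = (kk x - m x) + (kk y - m y) +
            ∑ ℓ ∈ (Finset.univ.erase x).erase y, (kk ℓ - m ℓ) :=
          sum_split_two (fun ℓ => kk ℓ - m ℓ) x y hxy
        have e3 : ∑ ℓ ∈ (Finset.univ.erase x).erase y, (kk ℓ - m' ℓ) =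
            ∑ ℓ ∈ (Finset.univ.erase x).erase y, (kk ℓ - m ℓ) := by
          apply Finset.sum_congr rfl
          intro ℓ hℓ
          simp only [Finset.mem_erase] at hℓ
          rw [hm'other ℓ hℓ.2.1 hℓ.1]
        rw [e1, hm'x, hm'y, e3] at *
        omega
      -- the key exchange inequality
      have hkkx1 : 1 ≤ kk x := by omega
      have hkky : kk y ≤ k - 1 := by have := hm y; omega
      have step1 : F x (kk x) - F x (kk x - 1) ≤ F x (m x + 1) - F x (m x) := by
        rcases eq_or_lt_of_le (Nat.succ_le_of_lt hx) with h | h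
        · rw [← h]; simp
        · have := hmarg x (m x + 1) (kk x) (by omega) h (hkk_le x)
          simpa using this
      have step2 : F y (kk y + 1) - F y (kk y) ≤ F x (kk x) - F x (kk x - 1) :=
        hstable x y hxy hkkx1 hkky
      have step3 : F y (m y) - F y (m y - 1) ≤ F y (kk y + 1) - F y (kk y) := by
        rcases eq_or_lt_of_le (Nat.succ_le_of_lt hy) with h | h
        · rw [← h]; simp
        · have := hmarg y (kk y + 1) (m y) (by omega) h (hm y)
          simpa using this
      have hexch : F x (m x) + F y (m y) ≤ F x (m x + 1) + F y (m y - 1) := by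
        have : F y (m y) - F y (m y - 1) ≤ F x (m x + 1) - F x (m x) :=
          le_trans step3 (le_trans step2 step1)
        linarith
      -- conclude
      have hstep : ∑ ℓ, F ℓ (m ℓ) ≤ ∑ ℓ, F ℓ (m' ℓ) := by
        rw [hsplit F m, hsplit F m', hm'x, hm'y]
        have e3 : ∑ ℓ ∈ (Finset.univ.erase x).erase y, F ℓ (m' ℓ) =
            ∑ ℓ ∈ (Finset.univ.erase x).erase y, F ℓ (m ℓ) := by
          apply Finset.sum_congr rfl
          intro ℓ hℓ
          simp only [Finset.mem_erase] at hℓ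
          rw [hm'other ℓ hℓ.2.1 hℓ.1]
        rw [e3]
        linarith
      exact le_trans hstep (ih m' hm'le hm'sum hdec)
end

section
/- In the single-attribute NNS setting with |D_ℓ| ≥ k for every ℓ, define F_ℓ(i) = log(η + (sum of the i largest similarity values s(v) over v ∈ D_ℓ)) for 0 ≤ i ≤ k. Let S ⊆ P with |S| = k satisfy: (i) for every ℓ, s(v) ≥ s(w) for all v ∈ S ∩ D_ℓ and w ∈ D_ℓ ∖ S, and (ii) the counts k_ℓ = |S ∩ D_ℓ| are swap-stable, i.e., for all x ≠ y with k_x ≥ 1 and k_y ≤ k − 1, F_x(k_x) − F_x(k_x−1) ≥ F_y(k_y+1) − F_y(k_y). Then S maximizes Nash social welfare: NSW(S) ≥ NSW(T) for every T ⊆ P with |T| = k. -/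
open Finset

/-- Discrete concavity of `log` step. -/
private lemma log_step_aux (a b c' : ℝ) (ha : 0 < a) (hab : a ≤ b) (hc : 0 < c')
    (h : c' + a ≤ 2 * b) :
    Real.log c' - Real.log b ≤ Real.log b - Real.log a := by
  have hb : 0 < b := lt_of_lt_of_le ha hab
  have h1 : Real.log c' ≤ Real.log (2 * b - a) := Real.log_le_log hc (by linarith)
  have h2 : Real.log (2 * b - a) + Real.log a ≤ Real.log b + Real.log b := by
    rw [← Real.log_mul (by linarith) (ne_of_gt ha), ← Real.log_mul (ne_of_gt hb) (ne_of_gt hb)]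
    exact Real.log_le_log (mul_pos (by linarith) ha) (by nlinarith [sq_nonneg (b - a)])
  linarith

/-- Exchange lemma: a set dominated elementwise by `A` off `A`, of the same
cardinality, has no larger sum. -/
private lemma sum_exchange_aux {V : Type*} [DecidableEq V] (s : V → ℝ) (A B : Finset V)
    (hcard : B.card = A.card)
    (hdom : ∀ b ∈ B, b ∉ A → ∀ a ∈ A, s b ≤ s a) :
    ∑ v ∈ B, s v ≤ ∑ v ∈ A, s v := by
  have hBA : (B \ A).card = (A \ B).card := by
    have h1 := Finset.card_inter_add_card_sdiff B A
    have h2 := Finset.card_inter_add_card_sdiff A B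
    rw [Finset.inter_comm] at h2
    omega
  have key : ∑ v ∈ B \ A, s v ≤ ∑ v ∈ A \ B, s v := by
    rcases Finset.eq_empty_or_nonempty (A \ B) with h | h
    · have : (B \ A) = ∅ := Finset.card_eq_zero.mp (by rw [hBA, h]; simp)
      rw [this, h]
    · obtain ⟨a0, ha0, hmin⟩ := Finset.exists_min_image (A \ B) s h
      have hub : ∑ v ∈ B \ A, s v ≤ (B \ A).card • s a0 := by
        apply Finset.sum_le_card_nsmul
        intro b hb
        rw [Finset.mem_sdiff] at hb
        exact hdom b hb.1 hb.2 a0 (Finset.mem_sdiff.mp ha0).1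
      have hlb : (A \ B).card • s a0 ≤ ∑ v ∈ A \ B, s v :=
        Finset.card_nsmul_le_sum _ _ _ hmin
      rw [hBA] at hub
      exact le_trans hub hlb
  calc ∑ v ∈ B, s v = ∑ v ∈ B ∩ A, s v + ∑ v ∈ B \ A, s v :=
        (Finset.sum_inter_add_sum_sdiff B A s).symm
    _ ≤ ∑ v ∈ A ∩ B, s v + ∑ v ∈ A \ B, s v := by
        rw [Finset.inter_comm]; linarith
    _ = ∑ v ∈ A, s v := Finset.sum_inter_add_sum_sdiff A B s

/-- From single-step concavity to comparison of arbitrary increments. -/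
private lemma conc_chain_aux (k : ℕ) (f : ℕ → ℝ)
    (hstep : ∀ i, 1 ≤ i → i + 1 ≤ k → f (i + 1) - f i ≤ f i - f (i - 1)) :
    ∀ i j, 1 ≤ i → i ≤ j → j ≤ k → f j - f (j - 1) ≤ f i - f (i - 1) := by
  intro i j hi hij hjk
  induction j with
  | zero => omega
  | succ n ih =>
    rcases eq_or_lt_of_le hij with h | h
    · rw [h]
    · have hin : i ≤ n := by omega
      have h1 := ih hin (by omega)
      have h2 := hstep n (by omega) (by omega)
      have e1 : n + 1 - 1 = n := by omega
      rw [e1]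
      linarith

/-- Swap stability implies global optimality for separable concave sums. -/
private lemma counts_opt_aux (c k : ℕ) (F : Fin c → ℕ → ℝ)
    (kv : Fin c → ℕ) (hksum : ∑ ℓ, kv ℓ = k)
    (conc : ∀ ℓ : Fin c, ∀ i j : ℕ, 1 ≤ i → i ≤ j → j ≤ k →
      F ℓ j - F ℓ (j - 1) ≤ F ℓ i - F ℓ (i - 1))
    (hstab : ∀ x y : Fin c, x ≠ y → 1 ≤ kv x → kv y + 1 ≤ k →
      F y (kv y + 1) - F y (kv y) ≤ F x (kv x) - F x (kv x - 1)) :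
    ∀ t : Fin c → ℕ, ∑ ℓ, t ℓ = k → ∑ ℓ, F ℓ (t ℓ) ≤ ∑ ℓ, F ℓ (kv ℓ) := by
  suffices H : ∀ n : ℕ, ∀ t : Fin c → ℕ,
      (∑ ℓ, ((t ℓ - kv ℓ) + (kv ℓ - t ℓ)) = n) → ∑ ℓ, t ℓ = k →
      ∑ ℓ, F ℓ (t ℓ) ≤ ∑ ℓ, F ℓ (kv ℓ) by
    intro t ht; exact H _ t rfl ht
  intro n
  induction n using Nat.strong_induction_on with
  | _ n IH =>
    intro t hd ht
    by_cases hall : ∀ ℓ, t ℓ = kv ℓ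
    · exact le_of_eq (Finset.sum_congr rfl (fun ℓ _ => by rw [hall ℓ]))
    · push_neg at hall
      obtain ⟨z, hz⟩ := hall
      -- find x with t x < kv x and y with kv y < t y
      have hsum : ∑ ℓ, t ℓ = ∑ ℓ, kv ℓ := by rw [ht, hksum]
      have hex : (∃ x, t x < kv x) ∧ (∃ y, kv y < t y) := by
        constructor
        · by_contra h
          push_neg at h
          rcases lt_or_gt_of_ne hz with h' | h'
          · exact absurd (h z) (not_le.mpr h')
          · have : ∑ ℓ, kv ℓ < ∑ ℓ, t ℓ :=
              Finset.sum_lt_sum (fun i _ => h i) ⟨z, Finset.mem_univ z, h'⟩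
            omega
        · by_contra h
          push_neg at h
          rcases lt_or_gt_of_ne hz with h' | h'
          · have : ∑ ℓ, t ℓ < ∑ ℓ, kv ℓ :=
              Finset.sum_lt_sum (fun i _ => h i) ⟨z, Finset.mem_univ z, h'⟩
            omega
          · exact absurd (h z) (not_le.mpr h')
      obtain ⟨⟨x, hx⟩, ⟨y, hy⟩⟩ := hex
      have hxy : x ≠ y := by intro h; rw [h] at hx; omega
      set t' : Fin c → ℕ := fun ℓ => if ℓ = x then t x + 1 else if ℓ = y then t y - 1 else t ℓ
        with ht'
      have ht'x : t' x = t x + 1 := by simp [ht']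
      have ht'y : t' y = t y - 1 := by simp [ht', hxy.symm]
      have ht'o : ∀ ℓ, ℓ ≠ x → ℓ ≠ y → t' ℓ = t ℓ := by
        intro ℓ h1 h2; simp [ht', h1, h2]
      -- sum of t' is k
      have ht's : ∑ ℓ, t' ℓ = k := by
        have heq : ∀ ℓ, t' ℓ + (if ℓ = y then 1 else 0) = t ℓ + (if ℓ = x then 1 else 0) := by
          intro ℓ
          by_cases h1 : ℓ = x
          · subst h1; simp [ht'x, hxy]
          · by_cases h2 : ℓ = y
            · subst h2; simp [ht'y, h1]; omega
            · simp [ht'o ℓ h1 h2, h1, h2]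
        have := Finset.sum_congr rfl (fun ℓ (_ : ℓ ∈ Finset.univ) => heq ℓ)
        rw [Finset.sum_add_distrib, Finset.sum_add_distrib,
          Finset.sum_ite_eq' Finset.univ y (fun _ => 1),
          Finset.sum_ite_eq' Finset.univ x (fun _ => 1)] at this
        simp at this
        omega
      -- distance decreases
      have hdlt : ∑ ℓ, ((t' ℓ - kv ℓ) + (kv ℓ - t' ℓ)) < n := by
        rw [← hd]
        apply Finset.sum_lt_sum
        · intro i _
          by_cases h1 : i = x
          · subst h1; rw [ht'x]; omega
          · by_cases h2 : i = y
            · subst h2; rw [ht'y]; omega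
            · rw [ht'o i h1 h2]
        · exact ⟨x, Finset.mem_univ x, by rw [ht'x]; omega⟩
      -- bounds
      have htyk : t y ≤ k := ht ▸ Finset.single_le_sum (fun i _ => Nat.zero_le _) (Finset.mem_univ y)
      have hkxk : kv x ≤ k := hksum ▸ Finset.single_le_sum (fun i _ => Nat.zero_le _) (Finset.mem_univ x)
      -- step inequality
      have h1 : F y (t y) - F y (t y - 1) ≤ F y (kv y + 1) - F y (kv y) := by
        have := conc y (kv y + 1) (t y) (by omega) (by omega) htyk
        simpa using this
      have h2 : F y (kv y + 1) - F y (kv y) ≤ F x (kv x) - F x (kv x - 1) :=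
        hstab x y hxy (by omega) (by omega)
      have h3 : F x (kv x) - F x (kv x - 1) ≤ F x (t x + 1) - F x (t x) := by
        have := conc x (t x + 1) (kv x) (by omega) (by omega) hkxk
        simpa using this
      -- sum comparison between t and t'
      have hsum_le : ∑ ℓ, F ℓ (t ℓ) ≤ ∑ ℓ, F ℓ (t' ℓ) := by
        have hzero : ∀ ℓ ∈ Finset.univ, ℓ ∉ ({x, y} : Finset (Fin c)) →
            F ℓ (t' ℓ) - F ℓ (t ℓ) = 0 := by
          intro ℓ _ hℓ
          simp only [Finset.mem_insert, Finset.mem_singleton] at hℓ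
          push_neg at hℓ
          rw [ht'o ℓ hℓ.1 hℓ.2, sub_self]
        have hsub : ∑ ℓ, (F ℓ (t' ℓ) - F ℓ (t ℓ)) =
            ∑ ℓ ∈ ({x, y} : Finset (Fin c)), (F ℓ (t' ℓ) - F ℓ (t ℓ)) :=
          (Finset.sum_subset (Finset.subset_univ _) hzero).symm
        rw [Finset.sum_pair hxy, ht'x, ht'y] at hsub
        have : 0 ≤ ∑ ℓ, (F ℓ (t' ℓ) - F ℓ (t ℓ)) := by
          rw [hsub]; linarith
        rw [Finset.sum_sub_distrib] at this
        linarith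
      exact le_trans hsum_le (IH _ hdlt t' rfl ht's)

/-- Optimality of greedy Nash-ANN: a size-`k` set `S` that, within each class,
picks vectors of maximal similarity and whose per-class counts are
swap-stable with respect to `F ℓ i = log(η + (sum of the `i` largest
similarities in `D ℓ`))`, maximizes Nash social welfare over all size-`k`
subsets of `P`. Here `G ℓ i` denotes the sum of the `i` largest similarity
values in `D ℓ`, characterized as the maximum sum over size-`i` subsets. -/
theorem greedy_nash_ann_optimal {V : Type*} [DecidableEq V] (c k : ℕ)
    (hc : 1 ≤ c)
    (P : Finset V) (D : Fin c → Finset V)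
    (hsub : ∀ ℓ, D ℓ ⊆ P)
    (hdisj : ∀ ℓ ℓ' : Fin c, ℓ ≠ ℓ' → Disjoint (D ℓ) (D ℓ'))
    (hcov : ∀ v ∈ P, ∃ ℓ, v ∈ D ℓ)
    (s : V → ℝ) (hs : ∀ v ∈ P, 0 ≤ s v)
    (η : ℝ) (hη : 0 < η)
    (hDk : ∀ ℓ, k ≤ (D ℓ).card)
    (G : Fin c → ℕ → ℝ)
    (hG : ∀ ℓ : Fin c, ∀ i ≤ k, ∃ A ⊆ D ℓ, A.card = i ∧ G ℓ i = ∑ v ∈ A, s v ∧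
      ∀ B ⊆ D ℓ, B.card = i → ∑ v ∈ B, s v ≤ G ℓ i)
    (F : Fin c → ℕ → ℝ)
    (hF : ∀ ℓ : Fin c, ∀ i ≤ k, F ℓ i = Real.log (η + G ℓ i))
    (S : Finset V) (hSsub : S ⊆ P) (hScard : S.card = k)
    (htop : ∀ ℓ : Fin c, ∀ v ∈ S ∩ D ℓ, ∀ w ∈ D ℓ, w ∉ S → s w ≤ s v)
    (hstable : ∀ x y : Fin c, x ≠ y →
      1 ≤ (S ∩ D x).card → (S ∩ D y).card ≤ k - 1 →
      F y ((S ∩ D y).card + 1) - F y ((S ∩ D y).card) ≤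
        F x ((S ∩ D x).card) - F x ((S ∩ D x).card - 1))
    (T : Finset V) (hTsub : T ⊆ P) (hTcard : T.card = k) :
    NSW D s η T ≤ NSW D s η S := by
  classical
  set kv : Fin c → ℕ := fun ℓ => (S ∩ D ℓ).card with hkv
  set tv : Fin c → ℕ := fun ℓ => (T ∩ D ℓ).card with htv
  -- partition cardinality
  have hpart : ∀ R : Finset V, R ⊆ P → ∑ ℓ, (R ∩ D ℓ).card = R.card := by
    intro R hR
    have hbi : R = Finset.univ.biUnion (fun ℓ => R ∩ D ℓ) := by
      ext v
      simp only [Finset.mem_biUnion, Finset.mem_univ, true_and, Finset.mem_inter]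
      constructor
      · intro hv
        obtain ⟨ℓ, hℓ⟩ := hcov v (hR hv)
        exact ⟨ℓ, hv, hℓ⟩
      · rintro ⟨ℓ, hv, -⟩; exact hv
    have hdis : ∀ x ∈ Finset.univ, ∀ y ∈ Finset.univ, x ≠ y →
        Disjoint (R ∩ D x) (R ∩ D y) := by
      intro x _ y _ hxy
      exact (hdisj x y hxy).mono (Finset.inter_subset_right) (Finset.inter_subset_right)
    calc ∑ ℓ, (R ∩ D ℓ).card = (Finset.univ.biUnion (fun ℓ => R ∩ D ℓ)).card :=
          (Finset.card_biUnion hdis).symm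
      _ = R.card := by rw [← hbi]
  have hSsum : ∑ ℓ, kv ℓ = k := by rw [hkv]; simpa [hScard] using hpart S hSsub
  have hTsum : ∑ ℓ, tv ℓ = k := by rw [htv]; simpa [hTcard] using hpart T hTsub
  have hkvk : ∀ ℓ, kv ℓ ≤ k := fun ℓ =>
    hSsum ▸ Finset.single_le_sum (fun i _ => Nat.zero_le _) (Finset.mem_univ ℓ)
  have htvk : ∀ ℓ, tv ℓ ≤ k := fun ℓ =>
    hTsum ▸ Finset.single_le_sum (fun i _ => Nat.zero_le _) (Finset.mem_univ ℓ)
  -- nonnegativity of G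
  have hGnn : ∀ ℓ, ∀ i ≤ k, 0 ≤ G ℓ i := by
    intro ℓ i hi
    obtain ⟨A, hA, -, hGeq, -⟩ := hG ℓ i hi
    rw [hGeq]
    exact Finset.sum_nonneg (fun v hv => hs v (hsub ℓ (hA hv)))
  -- monotonicity of G
  have hGmono : ∀ ℓ, ∀ i, i + 1 ≤ k → G ℓ i ≤ G ℓ (i + 1) := by
    intro ℓ i hi
    obtain ⟨A, hA, hAcard, hGeq, -⟩ := hG ℓ i (by omega)
    obtain ⟨-, -, -, -, hmax⟩ := hG ℓ (i + 1) hi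
    obtain ⟨B, hAB, hBD, hBcard⟩ :=
      Finset.exists_subsuperset_card_eq (n := i + 1) hA (by omega) (by have := hDk ℓ; omega)
    calc G ℓ i = ∑ v ∈ A, s v := hGeq
      _ ≤ ∑ v ∈ B, s v := Finset.sum_le_sum_of_subset_of_nonneg hAB
          (fun v hv _ => hs v (hsub ℓ (hBD hv)))
      _ ≤ G ℓ (i + 1) := hmax B hBD hBcard
  -- concavity of G
  have hGconc : ∀ ℓ, ∀ i, 1 ≤ i → i + 1 ≤ k → G ℓ (i + 1) + G ℓ (i - 1) ≤ 2 * G ℓ i := by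
    intro ℓ i h1 h2
    obtain ⟨A, hA, hAcard, hAeq, -⟩ := hG ℓ (i + 1) h2
    obtain ⟨C, hC, hCcard, hCeq, -⟩ := hG ℓ (i - 1) (by omega)
    obtain ⟨-, -, -, -, hmax⟩ := hG ℓ i (by omega)
    have hAC : ¬ (A ⊆ C) := fun h => by
      have := Finset.card_le_card h; omega
    obtain ⟨a, haA, haC⟩ := Finset.not_subset.mp hAC
    have hins : ∑ v ∈ insert a C, s v ≤ G ℓ i := by
      apply hmax
      · intro v hv
        rcases Finset.mem_insert.mp hv with h | h
        · exact h ▸ hA haA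
        · exact hC h
      · rw [Finset.card_insert_of_notMem haC, hCcard]; omega
    have hers : ∑ v ∈ A.erase a, s v ≤ G ℓ i := by
      apply hmax
      · exact fun v hv => hA (Finset.erase_subset a A hv)
      · rw [Finset.card_erase_of_mem haA, hAcard]; omega
    have e1 : ∑ v ∈ insert a C, s v = s a + ∑ v ∈ C, s v :=
      Finset.sum_insert haC
    have e2 : s a + ∑ v ∈ A.erase a, s v = ∑ v ∈ A, s v :=
      Finset.add_sum_erase A s haA
    rw [hAeq, hCeq]
    linarith
  -- step concavity of F
  have hFstep : ∀ ℓ, ∀ i, 1 ≤ i → i + 1 ≤ k →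
      F ℓ (i + 1) - F ℓ i ≤ F ℓ i - F ℓ (i - 1) := by
    intro ℓ i h1 h2
    rw [hF ℓ (i + 1) h2, hF ℓ i (by omega), hF ℓ (i - 1) (by omega)]
    apply log_step_aux
    · have := hGnn ℓ (i - 1) (by omega); linarith
    · have hm := hGmono ℓ (i - 1) (by omega)
      have e : i - 1 + 1 = i := by omega
      rw [e] at hm; linarith
    · have := hGnn ℓ (i + 1) h2; linarith
    · have := hGconc ℓ i h1 h2; linarith
  have hFconc : ∀ ℓ : Fin c, ∀ i j : ℕ, 1 ≤ i → i ≤ j → j ≤ k →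
      F ℓ j - F ℓ (j - 1) ≤ F ℓ i - F ℓ (i - 1) :=
    fun ℓ => conc_chain_aux k (F ℓ) (hFstep ℓ)
  -- the counts optimization
  have hcounts : ∑ ℓ, F ℓ (tv ℓ) ≤ ∑ ℓ, F ℓ (kv ℓ) := by
    apply counts_opt_aux c k F kv hSsum hFconc _ tv hTsum
    intro x y hxy h1 h2
    have h2' : (S ∩ D y).card + 1 ≤ k := h2
    exact hstable x y hxy h1 (by omega)
  -- utilities vs G
  have hUT : ∀ ℓ, utility D s T ℓ ≤ G ℓ (tv ℓ) := by
    intro ℓ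
    obtain ⟨-, -, -, -, hmax⟩ := hG ℓ (tv ℓ) (htvk ℓ)
    exact hmax (T ∩ D ℓ) (Finset.inter_subset_right) rfl
  have hUS : ∀ ℓ, utility D s S ℓ = G ℓ (kv ℓ) := by
    intro ℓ
    obtain ⟨A, hA, hAcard, hAeq, hmax⟩ := hG ℓ (kv ℓ) (hkvk ℓ)
    apply le_antisymm
    · exact hmax (S ∩ D ℓ) (Finset.inter_subset_right) rfl
    · rw [hAeq]
      apply sum_exchange_aux s (S ∩ D ℓ) A (by rw [hAcard])
      intro b hb hbS a ha
      have hbD : b ∈ D ℓ := hA hb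
      have hbnS : b ∉ S := fun h => hbS (Finset.mem_inter.mpr ⟨h, hbD⟩)
      exact htop ℓ a ha b hbD hbnS
  -- utility nonneg
  have hUTnn : ∀ ℓ, 0 ≤ utility D s T ℓ := fun ℓ =>
    Finset.sum_nonneg (fun v hv => hs v (hTsub (Finset.mem_inter.mp hv).1))
  -- final comparison of products
  have hprod : ∏ ℓ, (utility D s T ℓ + η) ≤ ∏ ℓ, (utility D s S ℓ + η) := by
    have hTpos : ∀ ℓ, 0 < utility D s T ℓ + η := fun ℓ => by
      have := hUTnn ℓ; linarith
    have hSpos : ∀ ℓ, 0 < utility D s S ℓ + η := fun ℓ => by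
      rw [hUS ℓ]; have := hGnn ℓ (kv ℓ) (hkvk ℓ); linarith
    have hlog : ∑ ℓ, Real.log (utility D s T ℓ + η) ≤
        ∑ ℓ, Real.log (utility D s S ℓ + η) := by
      calc ∑ ℓ, Real.log (utility D s T ℓ + η)
            ≤ ∑ ℓ, F ℓ (tv ℓ) := by
              apply Finset.sum_le_sum
              intro ℓ _
              rw [hF ℓ (tv ℓ) (htvk ℓ)]
              exact Real.log_le_log (hTpos ℓ) (by have := hUT ℓ; linarith)
          _ ≤ ∑ ℓ, F ℓ (kv ℓ) := hcounts
          _ = ∑ ℓ, Real.log (utility D s S ℓ + η) := by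
              apply Finset.sum_congr rfl
              intro ℓ _
              rw [hF ℓ (kv ℓ) (hkvk ℓ), hUS ℓ, add_comm]
    calc ∏ ℓ, (utility D s T ℓ + η)
        = Real.exp (∑ ℓ, Real.log (utility D s T ℓ + η)) := by
          rw [Real.exp_sum]
          exact Finset.prod_congr rfl (fun ℓ _ => (Real.exp_log (hTpos ℓ)).symm)
      _ ≤ Real.exp (∑ ℓ, Real.log (utility D s S ℓ + η)) := Real.exp_le_exp.mpr hlog
      _ = ∏ ℓ, (utility D s S ℓ + η) := by
          rw [Real.exp_sum]
          exact Finset.prod_congr rfl (fun ℓ _ => Real.exp_log (hSpos ℓ))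
  unfold NSW
  apply Real.rpow_le_rpow _ hprod (by positivity)
  exact Finset.prod_nonneg (fun ℓ _ => by have := hUTnn ℓ; linarith)
end

section
/- In the single-attribute NNS setting with |D_ℓ| ≥ k for every ℓ, let α ∈ (0,1] and suppose that for each ℓ ∈ {1,…,c} there is a subset D̂_ℓ ⊆ D_ℓ with |D̂_ℓ| = k such that, for every i ∈ {1,…,k}, the i-th largest similarity value among vectors of D̂_ℓ is at least α times the i-th largest similarity value among vectors of D_ℓ. Then the maximum Nash social welfare over size-k subsets of ∪_{ℓ=1}^c D̂_ℓ is at least α times the maximum Nash social welfare over size-k subsets of P: max_{S ⊆ ∪_ℓ D̂_ℓ, |S| = k} NSW(S) ≥ α · max_{S ⊆ P, |S| = k} NSW(S). -/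
lemma card_filter_fin_lt (k m : ℕ) (h : m ≤ k) :
    ((Finset.univ : Finset (Fin k)).filter fun i => i.1 < m).card = m := by
  have himg : ((Finset.univ : Finset (Fin k)).filter fun i => i.1 < m).image Fin.val
      = Finset.range m := by
    ext j
    simp only [Finset.mem_image, Finset.mem_filter, Finset.mem_univ, true_and, Finset.mem_range]
    constructor
    · rintro ⟨i, hi, rfl⟩; exact hi
    · intro hj; exact ⟨⟨j, lt_of_lt_of_le hj h⟩, hj, rfl⟩
  rw [← Finset.card_image_of_injective _ Fin.val_injective, himg, Finset.card_range]

lemma topsum {V : Type*} [DecidableEq V] (k : ℕ) (Dl : Finset V) (s : V → ℝ) (e : Fin k → V)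
    (hanti : ∀ i j : Fin k, i ≤ j → s (e j) ≤ s (e i))
    (htop : ∀ i : Fin k, ∀ w ∈ Dl, (∀ j : Fin k, w ≠ e j) → s w ≤ s (e i)) :
    ∀ m : ℕ, m ≤ k → ∀ A ⊆ Dl, A.card = m →
      ∑ v ∈ A, s v ≤ ∑ i ∈ Finset.univ.filter (fun i : Fin k => i.1 < m), s (e i) := by
  intro m
  induction m with
  | zero =>
    intro _ A _ hA
    rw [Finset.card_eq_zero.mp hA]
    simp
  | succ m ih =>
    intro hmk A hAD hA
    have hm : m < k := hmk
    have hne : A.Nonempty := Finset.card_pos.mp (by omega)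
    obtain ⟨v, hvA, hvmin⟩ := Finset.exists_min_image A s hne
    -- find w ∈ A not among e 0..e (m-1)
    set B : Finset V := (Finset.univ.filter (fun i : Fin k => i.1 < m)).image e with hB
    have hBcard : B.card ≤ m := le_trans Finset.card_image_le (le_of_eq (card_filter_fin_lt k m (le_of_lt hm)))
    have hlt : B.card < A.card := by omega
    have hex : ∃ w ∈ A, w ∉ B := by
      by_contra hcon
      push_neg at hcon
      exact absurd (Finset.card_le_card hcon) (not_le.mpr hlt)
    obtain ⟨w, hwA, hwB⟩ := hex
    have hwm : s w ≤ s (e ⟨m, hm⟩) := by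
      by_cases hj : ∃ j : Fin k, w = e j
      · obtain ⟨j, rfl⟩ := hj
        have hjm : m ≤ j.1 := by
          by_contra hjl
          exact hwB (Finset.mem_image.mpr ⟨j, Finset.mem_filter.mpr ⟨Finset.mem_univ _, by omega⟩, rfl⟩)
        exact hanti ⟨m, hm⟩ j hjm
      · push_neg at hj
        exact htop ⟨m, hm⟩ w (hAD hwA) hj
    have hvm : s v ≤ s (e ⟨m, hm⟩) := le_trans (hvmin w hwA) hwm
    have hAe : (A.erase v).card = m := by rw [Finset.card_erase_of_mem hvA, hA]; omega
    have hrec := ih (le_of_lt hm) (A.erase v) (le_trans (Finset.erase_subset _ _) hAD) hAe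
    have hsplit : ∑ x ∈ A, s x = s v + ∑ x ∈ A.erase v, s x :=
      (Finset.add_sum_erase A s hvA).symm
    have hfs : (Finset.univ.filter (fun i : Fin k => i.1 < m + 1))
        = insert (⟨m, hm⟩ : Fin k) (Finset.univ.filter (fun i : Fin k => i.1 < m)) := by
      ext i
      simp only [Finset.mem_filter, Finset.mem_insert, Finset.mem_univ, true_and, Fin.ext_iff]
      omega
    rw [hsplit, hfs, Finset.sum_insert (by simp)]
    exact add_le_add hvm hrec

/-- α-approximate oracle yields an α-approximation for NaNNS: if for each
class `ℓ` the subset `Dhat ℓ ⊆ D ℓ` of size `k` has its `i`-th largest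
similarity at least `α` times the `i`-th largest similarity in `D ℓ` (the
enumerations `ehat ℓ` and `est ℓ` list `Dhat ℓ`, respectively the top-`k`
vectors of `D ℓ`, in nonincreasing similarity order), then some size-`k`
subset of `⋃ ℓ, Dhat ℓ` attains at least `α` times the maximum NSW over all
size-`k` subsets of `P`. -/
theorem approx_oracle_nash {V : Type*} [DecidableEq V] (c k : ℕ)
    (hc : 1 ≤ c) (hk : 1 ≤ k)
    (P : Finset V) (D Dhat : Fin c → Finset V)
    (hsub : ∀ ℓ, D ℓ ⊆ P)
    (hdisj : ∀ ℓ ℓ' : Fin c, ℓ ≠ ℓ' → Disjoint (D ℓ) (D ℓ'))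
    (hcov : ∀ v ∈ P, ∃ ℓ, v ∈ D ℓ)
    (s : V → ℝ) (hs : ∀ v ∈ P, 0 ≤ s v)
    (η : ℝ) (hη : 0 < η)
    (hDk : ∀ ℓ, k ≤ (D ℓ).card)
    (α : ℝ) (hα0 : 0 < α) (hα1 : α ≤ 1)
    (hhatsub : ∀ ℓ, Dhat ℓ ⊆ D ℓ) (hhatcard : ∀ ℓ, (Dhat ℓ).card = k)
    (ehat est : Fin c → Fin k → V)
    (hehat_inj : ∀ ℓ, Function.Injective (ehat ℓ))
    (hehat_mem : ∀ ℓ i, ehat ℓ i ∈ Dhat ℓ)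
    (hehat_anti : ∀ ℓ : Fin c, ∀ i j : Fin k, i ≤ j → s (ehat ℓ j) ≤ s (ehat ℓ i))
    (hest_inj : ∀ ℓ, Function.Injective (est ℓ))
    (hest_mem : ∀ ℓ i, est ℓ i ∈ D ℓ)
    (hest_anti : ∀ ℓ : Fin c, ∀ i j : Fin k, i ≤ j → s (est ℓ j) ≤ s (est ℓ i))
    (hest_top : ∀ ℓ : Fin c, ∀ i : Fin k, ∀ w ∈ D ℓ,
      (∀ j : Fin k, w ≠ est ℓ j) → s w ≤ s (est ℓ i))
    (happrox : ∀ ℓ : Fin c, ∀ i : Fin k, α * s (est ℓ i) ≤ s (ehat ℓ i)) :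
    ∃ S ⊆ Finset.univ.biUnion Dhat, S.card = k ∧
      ∀ T ⊆ P, T.card = k → α * NSW D s η T ≤ NSW D s η S := by
  classical
  set U := Finset.univ.biUnion Dhat with hU
  -- candidate set and maximizer
  set C := U.powerset.filter (fun S => S.card = k) with hC
  have hℓ0 : (0 : ℕ) < c := hc
  have hCne : C.Nonempty := by
    refine ⟨Dhat ⟨0, hℓ0⟩, Finset.mem_filter.mpr ⟨Finset.mem_powerset.mpr ?_, hhatcard _⟩⟩
    intro v hv
    exact Finset.mem_biUnion.mpr ⟨⟨0, hℓ0⟩, Finset.mem_univ _, hv⟩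
  obtain ⟨S, hSC, hSmaxR⟩ := Finset.exists_max_image C (NSW D s η) hCne
  have hSsub : S ⊆ U := Finset.mem_powerset.mp (Finset.mem_filter.mp hSC).1
  have hScard : S.card = k := (Finset.mem_filter.mp hSC).2
  refine ⟨S, hSsub, hScard, ?_⟩
  intro T hTP hTk
  -- class counts
  set kl : Fin c → ℕ := fun ℓ => (T ∩ D ℓ).card with hkl
  have hklk : ∀ ℓ, kl ℓ ≤ k := by
    intro ℓ
    calc (T ∩ D ℓ).card ≤ T.card := Finset.card_le_card (Finset.inter_subset_left)
    _ = k := hTk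
  -- the substituted set
  set Sh : Finset V := Finset.univ.biUnion
      (fun ℓ => (Finset.univ.filter (fun i : Fin k => i.1 < kl ℓ)).image (ehat ℓ)) with hSh
  have hPiece : ∀ ℓ, ((Finset.univ.filter (fun i : Fin k => i.1 < kl ℓ)).image (ehat ℓ)) ⊆ Dhat ℓ := by
    intro ℓ v hv
    obtain ⟨i, _, rfl⟩ := Finset.mem_image.mp hv
    exact hehat_mem ℓ i
  have hShU : Sh ⊆ U := by
    intro v hv
    obtain ⟨ℓ, _, hvℓ⟩ := Finset.mem_biUnion.mp hv
    exact Finset.mem_biUnion.mpr ⟨ℓ, Finset.mem_univ _, hPiece ℓ hvℓ⟩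
  have hPieceCard : ∀ ℓ, ((Finset.univ.filter (fun i : Fin k => i.1 < kl ℓ)).image (ehat ℓ)).card = kl ℓ := by
    intro ℓ
    rw [Finset.card_image_of_injective _ (hehat_inj ℓ), card_filter_fin_lt k (kl ℓ) (hklk ℓ)]
  have hDdisj : ∀ ℓ ℓ' : Fin c, ℓ ≠ ℓ' → ∀ A B : Finset V, A ⊆ D ℓ → B ⊆ D ℓ' → Disjoint A B := by
    intro ℓ ℓ' hne A B hA hB
    exact Finset.disjoint_of_subset_left hA (Finset.disjoint_of_subset_right hB (hdisj ℓ ℓ' hne))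
  -- sum of class counts is k
  have hTsplit : T = Finset.univ.biUnion (fun ℓ => T ∩ D ℓ) := by
    ext v
    simp only [Finset.mem_biUnion, Finset.mem_inter, Finset.mem_univ, true_and]
    constructor
    · intro hv
      obtain ⟨ℓ, hℓ⟩ := hcov v (hTP hv)
      exact ⟨ℓ, hv, hℓ⟩
    · rintro ⟨ℓ, hv, _⟩; exact hv
  have hklsum : ∑ ℓ, kl ℓ = k := by
    rw [← hTk, hTsplit, Finset.card_biUnion]
    intro ℓ _ ℓ' _ hne
    exact hDdisj ℓ ℓ' hne _ _ Finset.inter_subset_right Finset.inter_subset_right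
  have hShcard : Sh.card = k := by
    rw [hSh, Finset.card_biUnion (fun ℓ _ ℓ' _ hne =>
      hDdisj ℓ ℓ' hne _ _ ((hPiece ℓ).trans (hhatsub ℓ)) ((hPiece ℓ').trans (hhatsub ℓ')))]
    rw [Finset.sum_congr rfl (fun ℓ _ => hPieceCard ℓ)]
    exact hklsum
  have hShC : Sh ∈ C := Finset.mem_filter.mpr ⟨Finset.mem_powerset.mpr hShU, hShcard⟩
  -- Sh ∩ D ℓ is exactly the ℓ-piece
  have hShInter : ∀ ℓ, Sh ∩ D ℓ = (Finset.univ.filter (fun i : Fin k => i.1 < kl ℓ)).image (ehat ℓ) := by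
    intro ℓ
    ext v
    simp only [Finset.mem_inter]
    constructor
    · rintro ⟨hv, hvD⟩
      obtain ⟨ℓ', _, hvℓ'⟩ := Finset.mem_biUnion.mp hv
      by_cases h : ℓ' = ℓ
      · subst h; exact hvℓ'
      · exact absurd hvD (Finset.disjoint_left.mp
          (hDdisj ℓ' ℓ h _ _ ((hPiece ℓ').trans (hhatsub ℓ')) le_rfl) hvℓ' |>.elim)
    · intro hv
      exact ⟨Finset.mem_biUnion.mpr ⟨ℓ, Finset.mem_univ _, hv⟩, hhatsub ℓ (hPiece ℓ hv)⟩
  -- utility comparison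
  have hutil : ∀ ℓ, α * utility D s T ℓ ≤ utility D s Sh ℓ := by
    intro ℓ
    have h1 : utility D s T ℓ ≤ ∑ i ∈ Finset.univ.filter (fun i : Fin k => i.1 < kl ℓ), s (est ℓ i) :=
      topsum k (D ℓ) s (est ℓ) (hest_anti ℓ) (hest_top ℓ) (kl ℓ) (hklk ℓ)
        (T ∩ D ℓ) Finset.inter_subset_right rfl
    have h2 : utility D s Sh ℓ = ∑ i ∈ Finset.univ.filter (fun i : Fin k => i.1 < kl ℓ), s (ehat ℓ i) := by
      rw [utility, hShInter ℓ, Finset.sum_image (fun i _ j _ h => hehat_inj ℓ h)]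
    calc α * utility D s T ℓ
        ≤ α * ∑ i ∈ Finset.univ.filter (fun i : Fin k => i.1 < kl ℓ), s (est ℓ i) := by
          exact mul_le_mul_of_nonneg_left h1 (le_of_lt hα0)
      _ = ∑ i ∈ Finset.univ.filter (fun i : Fin k => i.1 < kl ℓ), α * s (est ℓ i) := Finset.mul_sum _ _ _
      _ ≤ ∑ i ∈ Finset.univ.filter (fun i : Fin k => i.1 < kl ℓ), s (ehat ℓ i) :=
          Finset.sum_le_sum (fun i _ => happrox ℓ i)
      _ = utility D s Sh ℓ := h2.symm
  -- NSW comparison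
  have hTnonneg : ∀ ℓ, 0 ≤ utility D s T ℓ := by
    intro ℓ
    apply Finset.sum_nonneg
    intro v hv
    exact hs v (hTP (Finset.mem_inter.mp hv).1)
  have hfac : ∀ ℓ : Fin c, α * (utility D s T ℓ + η) ≤ utility D s Sh ℓ + η := by
    intro ℓ
    have : α * η ≤ η := by nlinarith
    nlinarith [hutil ℓ]
  have hfacpos : ∀ ℓ : Fin c, 0 ≤ α * (utility D s T ℓ + η) := by
    intro ℓ
    have := hTnonneg ℓ
    positivity
  have hprodle : ∏ ℓ, (α * (utility D s T ℓ + η)) ≤ ∏ ℓ, (utility D s Sh ℓ + η) :=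
    Finset.prod_le_prod (fun ℓ _ => hfacpos ℓ) (fun ℓ _ => hfac ℓ)
  have hproddist : ∏ ℓ : Fin c, (α * (utility D s T ℓ + η)) = α ^ c * ∏ ℓ, (utility D s T ℓ + η) := by
    rw [Finset.prod_mul_distrib, Finset.prod_const, Finset.card_univ, Fintype.card_fin]
  have hTprodnn : 0 ≤ ∏ ℓ, (utility D s T ℓ + η) :=
    Finset.prod_nonneg (fun ℓ _ => by have := hTnonneg ℓ; linarith)
  have hcne : (c : ℝ) ≠ 0 := Nat.cast_ne_zero.mpr (by omega)
  have hNSWsh : α * NSW D s η T ≤ NSW D s η Sh := by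
    rw [NSW, NSW]
    have key : (α ^ c * ∏ ℓ, (utility D s T ℓ + η)) ^ ((1:ℝ)/c)
        ≤ (∏ ℓ, (utility D s Sh ℓ + η)) ^ ((1:ℝ)/c) := by
      apply Real.rpow_le_rpow (by positivity) (by rw [← hproddist]; exact hprodle) (by positivity)
    have expand : (α ^ c * ∏ ℓ, (utility D s T ℓ + η)) ^ ((1:ℝ)/c)
        = α * (∏ ℓ, (utility D s T ℓ + η)) ^ ((1:ℝ)/c) := by
      rw [Real.mul_rpow (by positivity) hTprodnn, ← Real.rpow_natCast α c,
        ← Real.rpow_mul (le_of_lt hα0)]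
      rw [show (c : ℝ) * ((1:ℝ)/c) = 1 by field_simp, Real.rpow_one]
    rw [← expand]; exact key
  exact le_trans hNSWsh (hSmaxR Sh hShC)
end

section
/- For every real a > 0 and every x ∈ (0, a], it holds that x · log(1 + a/x) ≤ a · log 2. Moreover, equality holds if and only if x = a. -/
/-- For every `a > 0` and `x ∈ (0, a]`, `x * log (1 + a / x) ≤ a * log 2`,
with equality iff `x = a`. -/
theorem log_inequality_technical (a x : ℝ) (ha : 0 < a) (hx0 : 0 < x)
    (hxa : x ≤ a) :
    x * Real.log (1 + a / x) ≤ a * Real.log 2 ∧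
      (x * Real.log (1 + a / x) = a * Real.log 2 ↔ x = a) := by
  have hl2 : (0.6931471803 : ℝ) < Real.log 2 := Real.log_two_gt_d9
  have key : ∀ s : ℝ, 1 < s → Real.log (1 + s) < s * Real.log 2 := by
    intro s hs
    have h1 : (1 : ℝ) + s < Real.exp (s * Real.log 2) := by
      have he : Real.exp (s * Real.log 2) = 2 * Real.exp ((s - 1) * Real.log 2) := by
        rw [show s * Real.log 2 = Real.log 2 + (s - 1) * Real.log 2 by ring,
          Real.exp_add, Real.exp_log two_pos]
      have h3 : (s - 1) * Real.log 2 + 1 ≤ Real.exp ((s - 1) * Real.log 2) :=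
        Real.add_one_le_exp _
      nlinarith
    calc Real.log (1 + s) < Real.log (Real.exp (s * Real.log 2)) :=
          Real.log_lt_log (by linarith) h1
      _ = s * Real.log 2 := Real.log_exp _
  rcases eq_or_lt_of_le hxa with heq | hlt
  · subst heq
    rw [div_self hx0.ne']
    norm_num
  · have hs : 1 < a / x := (one_lt_div hx0).mpr hlt
    have hk := key _ hs
    have hstrict : x * Real.log (1 + a / x) < a * Real.log 2 := by
      have h := mul_lt_mul_of_pos_left hk hx0
      have : x * (a / x * Real.log 2) = a * Real.log 2 := by
        field_simp
      linarith [h, this.le, this.ge]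
    exact ⟨hstrict.le, by constructor <;> intro h <;> [exact absurd h hstrict.ne; exact absurd h hlt.ne]⟩
end

section
/- In the multi-attribute NNS setting with smoothing constant η = 1 and |P| ≥ k, consider any greedy chain ∅ = S_0 ⊆ S_1 ⊆ … ⊆ S_k where, for each i ∈ {1,…,k}, S_i = S_{i−1} ∪ {v_i} with v_i ∈ P ∖ S_{i−1} maximizing f(S_{i−1} ∪ {v}) over all v ∈ P ∖ S_{i−1}. Then f(S_k) ≥ (1 − 1/e) · max_{T ⊆ P, |T| = k} f(T), where f(S) = (1/c) ∑_{ℓ=1}^c log(1 + u_ℓ(S)). -/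
/-!
Each summand of `f` is `log (1 + ·)` applied to a nonnegative additive set function, so `f` is
monotone and has diminishing returns: the gain from adding a point shrinks as the set grows,
because the increments of the concave `log` do. For such `f` the Nemhauser–Wolsey–Fisher argument
applies: `f T - f (S i)` is at most the sum of the `≤ k` marginal gains of the points of `T` at
`S i`, each at most the greedy gain, so the gap `f T - f (S i)` shrinks by a factor `1 - 1/k` per
step, and `(1 - 1/k)^k ≤ 1/e`.
-/

open Finset Real

section DiminishingReturns

variable {V : Type*} [DecidableEq V]

def DiminishingReturnsOn (f : Finset V → ℝ) (P : Finset V) : Prop :=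
  ∀ ⦃A B : Finset V⦄, A ⊆ B → B ⊆ P → ∀ ⦃w : V⦄, w ∈ P → w ∉ B →
    f (insert w B) - f B ≤ f (insert w A) - f A

namespace DiminishingReturnsOn

variable {f : Finset V → ℝ} {P : Finset V}

lemma const_mul (hf : DiminishingReturnsOn f P) {a : ℝ} (ha : 0 ≤ a) :
    DiminishingReturnsOn (fun A => a * f A) P := by
  intro A B hAB hBP w hwP hwB
  simp only [← mul_sub]
  exact mul_le_mul_of_nonneg_left (hf hAB hBP hwP hwB) ha

lemma sum {ι : Type*} (I : Finset ι) {g : ι → Finset V → ℝ}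
    (hg : ∀ i ∈ I, DiminishingReturnsOn (g i) P) :
    DiminishingReturnsOn (fun A => ∑ i ∈ I, g i A) P := by
  intro A B hAB hBP w hwP hwB
  simp only [← Finset.sum_sub_distrib]
  exact Finset.sum_le_sum fun i hi => hg i hi hAB hBP hwP hwB

lemma sub_le_sum_of_disjoint (hf : DiminishingReturnsOn f P) {A : Finset V} (hAP : A ⊆ P)
    {F : Finset V} (hFP : F ⊆ P) (hAF : Disjoint A F) :
    f (A ∪ F) - f A ≤ ∑ w ∈ F, (f (insert w A) - f A) := by
  induction F using Finset.induction_on with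
  | empty => simp
  | @insert w F hwF ih =>
    have hwP : w ∈ P := hFP (mem_insert_self w F)
    have hwA : w ∉ A := Finset.disjoint_right.mp hAF (mem_insert_self w F)
    have hFP' : F ⊆ P := (subset_insert w F).trans hFP
    have hgain := hf subset_union_left (union_subset hAP hFP') hwP
      (by simp [hwA, hwF])
    rw [sum_insert hwF, union_insert]
    linarith [ih hFP' (disjoint_of_subset_right (subset_insert w F) hAF)]

lemma sub_le_sum_sdiff (hf : DiminishingReturnsOn f P) {A T : Finset V} (hAP : A ⊆ P)
    (hTP : T ⊆ P) :
    f (A ∪ T) - f A ≤ ∑ w ∈ T \ A, (f (insert w A) - f A) := by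
  rw [← union_sdiff_self_eq_union]
  exact hf.sub_le_sum_of_disjoint hAP (sdiff_subset.trans hTP) disjoint_sdiff

end DiminishingReturnsOn

end DiminishingReturns

lemma Real.log_add_sub_log_le_of_le {a b x : ℝ} (ha : 0 < a) (hab : a ≤ b) (hx : 0 ≤ x) :
    log (b + x) - log b ≤ log (a + x) - log a := by
  have hb : 0 < b := ha.trans_le hab
  rw [← log_div (by positivity) hb.ne', ← log_div (by positivity) ha.ne', add_div, add_div,
    div_self hb.ne', div_self ha.ne']
  gcongr

section LogOneAddSum

variable {V : Type*} {P : Finset V} {x : V → ℝ}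

lemma monotoneOn_log_one_add_sum (hx : ∀ v ∈ P, 0 ≤ x v) :
    MonotoneOn (fun A => log (1 + ∑ v ∈ A, x v)) (Set.Iic P) := by
  intro A hA B hB hAB
  have hA0 : 0 ≤ ∑ v ∈ A, x v := sum_nonneg fun v hv => hx v (hA hv)
  dsimp only
  gcongr
  exact fun v hv _ => hx v (hB hv)

lemma diminishingReturnsOn_log_one_add_sum [DecidableEq V] (hx : ∀ v ∈ P, 0 ≤ x v) :
    DiminishingReturnsOn (fun A => log (1 + ∑ v ∈ A, x v)) P := by
  intro A B hAB hBP w hwP hwB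
  have hwA : w ∉ A := fun h => hwB (hAB h)
  have hA0 : 0 ≤ ∑ v ∈ A, x v := sum_nonneg fun v hv => hx v (hBP (hAB hv))
  have hAB' : ∑ v ∈ A, x v ≤ ∑ v ∈ B, x v :=
    sum_le_sum_of_subset_of_nonneg hAB fun v hv _ => hx v (hBP hv)
  simp only [sum_insert hwA, sum_insert hwB, ← add_assoc, add_right_comm _ (x w)]
  exact log_add_sub_log_le_of_le (by linarith) (by linarith) (hx w hwP)

end LogOneAddSum

lemma le_exp_neg_one_mul_of_le_mul_sub {d : ℕ → ℝ} {k : ℕ} (hk : 0 < k) (hd0 : 0 ≤ d 0)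
    (hd : ∀ i < k, d i ≤ k * (d i - d (i + 1))) : d k ≤ exp (-1) * d 0 := by
  have hk' : (0 : ℝ) < k := by exact_mod_cast hk
  have hq : 0 ≤ 1 - 1 / (k : ℝ) := by
    rw [sub_nonneg, div_le_one hk']
    exact_mod_cast hk
  have hpow : ∀ i ≤ k, d i ≤ (1 - 1 / (k : ℝ)) ^ i * d 0 := by
    intro i
    induction i with
    | zero => simp
    | succ i ih =>
      intro hi
      have hdrop : d i / k ≤ d i - d (i + 1) := by
        rw [div_le_iff₀ hk', mul_comm]
        exact hd i hi
      calc d (i + 1) ≤ d i - d i / k := by linarith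
        _ = (1 - 1 / (k : ℝ)) * d i := by ring
        _ ≤ (1 - 1 / (k : ℝ)) * ((1 - 1 / (k : ℝ)) ^ i * d 0) :=
            mul_le_mul_of_nonneg_left (ih (by omega)) hq
        _ = (1 - 1 / (k : ℝ)) ^ (i + 1) * d 0 := by ring
  calc d k ≤ (1 - 1 / (k : ℝ)) ^ k * d 0 := hpow k le_rfl
    _ ≤ exp (-1) * d 0 := by
      gcongr
      simpa using one_sub_div_pow_le_exp_neg (n := k) (t := 1) (by exact_mod_cast hk)

section Greedy

variable {V : Type*} [DecidableEq V]

def IsGreedyChain (f : Finset V → ℝ) (P : Finset V) (S : ℕ → Finset V) (k : ℕ) : Prop :=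
  ∀ i < k, ∃ w ∈ P, S (i + 1) = insert w (S i) ∧
    ∀ w' ∈ P, w' ∉ S i → f (insert w' (S i)) ≤ f (S (i + 1))

namespace IsGreedyChain

variable {f : Finset V → ℝ} {P T : Finset V} {S : ℕ → Finset V} {k : ℕ}

lemma subset (hS : IsGreedyChain f P S k) (hS0 : S 0 ⊆ P) : ∀ i ≤ k, S i ⊆ P := by
  intro i
  induction i with
  | zero => exact fun _ => hS0
  | succ i ih =>
    intro hi
    obtain ⟨w, hwP, hSi, -⟩ := hS i hi
    rw [hSi]
    exact insert_subset hwP (ih (by omega))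

lemma le_add_mul_sub (hS : IsGreedyChain f P S k) (hmono : MonotoneOn f (Set.Iic P))
    (hdr : DiminishingReturnsOn f P) {i : ℕ} (hi : i < k) (hSP : S i ⊆ P) (hTP : T ⊆ P)
    (hT : T.card ≤ k) :
    f T ≤ f (S i) + k * (f (S (i + 1)) - f (S i)) := by
  obtain ⟨w, hwP, hSi, hbest⟩ := hS i hi
  have hgain : 0 ≤ f (S (i + 1)) - f (S i) := by
    rw [hSi, sub_nonneg]
    exact hmono hSP (insert_subset hwP hSP) (subset_insert w (S i))
  calc f T ≤ f (S i ∪ T) := hmono hTP (union_subset hSP hTP) subset_union_right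
    _ ≤ f (S i) + ∑ w ∈ T \ S i, (f (insert w (S i)) - f (S i)) := by
        linarith [hdr.sub_le_sum_sdiff hSP hTP]
    _ ≤ f (S i) + ∑ _w ∈ T \ S i, (f (S (i + 1)) - f (S i)) := by
        gcongr with w hw
        rw [mem_sdiff] at hw
        exact hbest w (hTP hw.1) hw.2
    _ = f (S i) + (T \ S i).card * (f (S (i + 1)) - f (S i)) := by
        rw [sum_const, nsmul_eq_mul]
    _ ≤ f (S i) + k * (f (S (i + 1)) - f (S i)) := by
        gcongr
        exact_mod_cast (card_le_card sdiff_subset).trans hT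

theorem approx (hS : IsGreedyChain f P S k) (hmono : MonotoneOn f (Set.Iic P))
    (hdr : DiminishingReturnsOn f P) (hS0 : S 0 = ∅) (hTP : T ⊆ P) (hT : T.card ≤ k) :
    (1 - exp (-1)) * (f T - f ∅) ≤ f (S k) - f ∅ := by
  rcases Nat.eq_zero_or_pos k with rfl | hk
  · rw [card_eq_zero.mp (Nat.le_zero.mp hT), hS0]
    simp
  have hSP := hS.subset (hS0 ▸ empty_subset P)
  have hdecay := le_exp_neg_one_mul_of_le_mul_sub (d := fun i => f T - f (S i)) hk
    (by simpa [hS0] using hmono (empty_subset P) hTP (empty_subset T))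
    fun i hi => by linear_combination hS.le_add_mul_sub hmono hdr hi (hSP i hi.le) hTP hT
  simp only [hS0] at hdecay
  linarith

end IsGreedyChain

end Greedy

theorem greedy_multi_nash_guarantee_general {V : Type*} [DecidableEq V] (c k : ℕ)
    (P : Finset V)
    (atb : V → Finset (Fin c))
    (s : V → ℝ) (hs : ∀ v ∈ P, 0 ≤ s v)
    (f : Finset V → ℝ)
    (hf : ∀ S : Finset V, f S = (1 / (c : ℝ)) * ∑ ℓ : Fin c,
      Real.log (1 + ∑ v ∈ S.filter (fun v => ℓ ∈ atb v), s v))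
    (S : ℕ → Finset V) (hS0 : S 0 = ∅)
    (v : ℕ → V)
    (hmem : ∀ i, 1 ≤ i → i ≤ k → v i ∈ P ∧ v i ∉ S (i - 1))
    (hstep : ∀ i, 1 ≤ i → i ≤ k → S i = insert (v i) (S (i - 1)))
    (hgreedy : ∀ i, 1 ≤ i → i ≤ k → ∀ w ∈ P, w ∉ S (i - 1) →
      f (insert w (S (i - 1))) ≤ f (insert (v i) (S (i - 1))))
    (T : Finset V) (hTP : T ⊆ P) (hTcard : T.card = k) :
    (1 - 1 / Real.exp 1) * f T ≤ f (S k) := by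
  set x : Fin c → V → ℝ := fun ℓ v => if ℓ ∈ atb v then s v else 0
  have hx : ∀ ℓ, ∀ v ∈ P, 0 ≤ x ℓ v := fun ℓ v hv => by
    simp only [x]
    split_ifs
    exacts [hs v hv, le_rfl]
  have hf' : f = fun A => (1 / (c : ℝ)) * ∑ ℓ, log (1 + ∑ v ∈ A, x ℓ v) :=
    funext fun A => by simp only [hf, x, sum_filter]
  have hmono : MonotoneOn f (Set.Iic P) := fun A hA B hB hAB => by
    rw [hf']
    exact mul_le_mul_of_nonneg_left
      (sum_le_sum fun ℓ _ => monotoneOn_log_one_add_sum (hx ℓ) hA hB hAB) (by positivity)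
  have hdr : DiminishingReturnsOn f P := hf' ▸
    (DiminishingReturnsOn.sum _ fun ℓ _ => diminishingReturnsOn_log_one_add_sum (hx ℓ)).const_mul
      (by positivity)
  have hchain : IsGreedyChain f P S k := by
    intro i hi
    have hSi : S (i + 1) = insert (v (i + 1)) (S i) := by simpa using hstep (i + 1) (by omega) hi
    refine ⟨v (i + 1), (hmem (i + 1) (by omega) hi).1, hSi, fun w hwP hwS => ?_⟩
    simpa [hSi] using hgreedy (i + 1) (by omega) hi w hwP (by simpa using hwS)
  have hf0 : f ∅ = 0 := by simp [hf]
  simpa [hf0, exp_neg, one_div] using hchain.approx hmono hdr hS0 hTP hTcard.le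

/-- `(1 - 1/e)`-approximation guarantee of the greedy MultiNashANN algorithm:
any greedy chain `∅ = S 0 ⊆ S 1 ⊆ … ⊆ S k`, where at each step the vector
maximizing the resulting value of `f(S) = (1/c) ∑ ℓ, log (1 + u_ℓ(S))` is
added, satisfies `f (S k) ≥ (1 - 1/e) · max_{T ⊆ P, |T| = k} f T`. -/
theorem greedy_multi_nash_guarantee {V : Type*} [DecidableEq V] (c k : ℕ)
    (hc : 1 ≤ c)
    (P : Finset V) (hPk : k ≤ P.card)
    (atb : V → Finset (Fin c))
    (s : V → ℝ) (hs : ∀ v ∈ P, 0 ≤ s v)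
    (f : Finset V → ℝ)
    (hf : ∀ S : Finset V, f S = (1 / (c : ℝ)) * ∑ ℓ : Fin c,
      Real.log (1 + ∑ v ∈ S.filter (fun v => ℓ ∈ atb v), s v))
    (S : ℕ → Finset V) (hS0 : S 0 = ∅)
    (v : ℕ → V)
    (hmem : ∀ i, 1 ≤ i → i ≤ k → v i ∈ P ∧ v i ∉ S (i - 1))
    (hstep : ∀ i, 1 ≤ i → i ≤ k → S i = insert (v i) (S (i - 1)))
    (hgreedy : ∀ i, 1 ≤ i → i ≤ k → ∀ w ∈ P, w ∉ S (i - 1) →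
      f (insert w (S (i - 1))) ≤ f (insert (v i) (S (i - 1))))
    (T : Finset V) (hTP : T ⊆ P) (hTcard : T.card = k) :
    (1 - 1 / Real.exp 1) * f T ≤ f (S k) :=
  greedy_multi_nash_guarantee_general c k P atb s hs f hf S hS0 v hmem hstep hgreedy T hTP hTcard
end

section
/- Let n, k, τ ≥ 1 be integers and let 𝒮 be a finite family of τ-element subsets of {1,…,n}. For a subfamily N ⊆ 𝒮 and ℓ ∈ {1,…,n}, let u_ℓ(N) = |{S ∈ N : ℓ ∈ S}|. Then there exists a subfamily N ⊆ 𝒮 with |N| = k and ∑_{ℓ=1}^n log(1 + u_ℓ(N)) ≥ τ · k · log 2 if and only if there exists a subfamily I ⊆ 𝒮 with |I| = k whose members are pairwise disjoint. Moreover, when such a pairwise disjoint subfamily I exists, it satisfies ∑_{ℓ=1}^n log(1 + u_ℓ(I)) = τ · k · log 2. -/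
/-!
Since `1 + u ≤ 2 ^ u` for `u : ℕ`, with equality exactly when `u ≤ 1`, we get
`∑ ℓ, log (1 + u_ℓ(N)) ≤ (∑ ℓ, u_ℓ(N)) log 2`, and by double counting
`∑ ℓ, u_ℓ(N) = ∑ S ∈ N, |S| = τ k`. So `τ k log 2` is an upper bound, attained exactly when
every element lies in at most one member of `N`, i.e. when `N` is pairwise disjoint.
-/

open Finset Real

namespace Real

theorem log_one_add_natCast_le (m : ℕ) : log (1 + m) ≤ m * log 2 := by
  have hpow : (1 + m : ℝ) ≤ 2 ^ m := by
    simpa [one_add_one_eq_two] using one_add_mul_le_pow (a := (1 : ℝ)) (by norm_num) m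
  calc log (1 + m) ≤ log (2 ^ m) := log_le_log (by positivity) hpow
    _ = m * log 2 := by rw [log_pow]

theorem log_one_add_natCast_eq_iff (m : ℕ) : log (1 + m) = m * log 2 ↔ m ≤ 1 := by
  refine ⟨fun heq => ?_, fun hm => by interval_cases m <;> norm_num⟩
  by_contra! hm
  have hpow : (1 + m : ℝ) < 2 ^ (m : ℝ) := by
    simpa [one_add_one_eq_two] using
      one_add_mul_self_lt_rpow_one_add (s := 1) (by norm_num) one_ne_zero (p := m)
        (by exact_mod_cast hm)
  have hlt : log (1 + m) < m * log 2 := by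
    calc log (1 + m) < log (2 ^ (m : ℝ)) := log_lt_log (by positivity) hpow
      _ = m * log 2 := log_rpow two_pos m
  exact hlt.ne heq

end Real

namespace Finset

variable {α : Type*} [DecidableEq α]

theorem sum_card_filter_mem [Fintype α] (N : Finset (Finset α)) :
    ∑ ℓ, #{S ∈ N | ℓ ∈ S} = ∑ S ∈ N, #S := by
  simpa [bipartiteAbove, bipartiteBelow] using
    sum_card_bipartiteAbove_eq_sum_card_bipartiteBelow (s := univ) (t := N) (r := (· ∈ ·))

theorem forall_card_filter_mem_le_one_iff (N : Finset (Finset α)) :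
    (∀ ℓ, #{S ∈ N | ℓ ∈ S} ≤ 1) ↔ (N : Set (Finset α)).Pairwise Disjoint := by
  simp only [card_le_one, mem_filter]
  constructor
  · intro h S hS S' hS' hne
    exact disjoint_left.2 fun ℓ hℓ hℓ' => hne (h ℓ S ⟨hS, hℓ⟩ S' ⟨hS', hℓ'⟩)
  · intro h ℓ S ⟨hS, hℓ⟩ S' ⟨hS', hℓ'⟩
    by_contra hne
    exact disjoint_left.1 (h hS hS' hne) hℓ hℓ'

theorem sum_log_one_add_card_filter_mem_le [Fintype α] (N : Finset (Finset α)) :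
    ∑ ℓ, log (1 + #{S ∈ N | ℓ ∈ S}) ≤ (∑ S ∈ N, #S : ℕ) * log 2 := by
  rw [← sum_card_filter_mem, Nat.cast_sum, sum_mul]
  exact sum_le_sum fun ℓ _ => log_one_add_natCast_le _

theorem sum_log_one_add_card_filter_mem_eq_iff [Fintype α] (N : Finset (Finset α)) :
    ∑ ℓ, log (1 + #{S ∈ N | ℓ ∈ S}) = (∑ S ∈ N, #S : ℕ) * log 2 ↔
      (N : Set (Finset α)).Pairwise Disjoint := by
  rw [← sum_card_filter_mem, Nat.cast_sum, sum_mul,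
    sum_eq_sum_iff_of_le fun ℓ _ => log_one_add_natCast_le _,
    ← forall_card_filter_mem_le_one_iff]
  simp only [mem_univ, forall_const, log_one_add_natCast_eq_iff]

end Finset

theorem set_packing_reduction_general (n k τ : ℕ)
    (𝒮 : Finset (Finset (Fin n)))
    (hτcard : ∀ S ∈ 𝒮, S.card = τ) :
    ((∃ N ⊆ 𝒮, N.card = k ∧
        ((τ : ℝ) * k) * Real.log 2 ≤
          ∑ ℓ : Fin n,
            Real.log (1 + ((N.filter (fun S => ℓ ∈ S)).card : ℝ))) ↔
      (∃ I ⊆ 𝒮, I.card = k ∧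
        ∀ S ∈ I, ∀ S' ∈ I, S ≠ S' → Disjoint S S')) ∧
    (∀ I ⊆ 𝒮, I.card = k → (∀ S ∈ I, ∀ S' ∈ I, S ≠ S' → Disjoint S S') →
      ∑ ℓ : Fin n, Real.log (1 + ((I.filter (fun S => ℓ ∈ S)).card : ℝ)) =
        ((τ : ℝ) * k) * Real.log 2) := by
  have hsize : ∀ N ⊆ 𝒮, N.card = k → ((∑ S ∈ N, #S : ℕ) : ℝ) = τ * k := fun N hN hk => by
    rw [sum_congr rfl fun S hS => hτcard S (hN hS), sum_const, hk, smul_eq_mul]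
    push_cast
    ring
  have hpacking : ∀ I ⊆ 𝒮, I.card = k → (∀ S ∈ I, ∀ S' ∈ I, S ≠ S' → Disjoint S S') →
      ∑ ℓ : Fin n, log (1 + #{S ∈ I | ℓ ∈ S}) = τ * k * log 2 := fun I hI hk hdisj => by
    rw [← hsize I hI hk]
    exact (sum_log_one_add_card_filter_mem_eq_iff I).2 fun S hS S' hS' => hdisj S hS S' hS'
  refine ⟨⟨fun ⟨N, hN, hk, hge⟩ => ⟨N, hN, hk, ?_⟩,
    fun ⟨I, hI, hk, hdisj⟩ => ⟨I, hI, hk, (hpacking I hI hk hdisj).ge⟩⟩, hpacking⟩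
  have hle := sum_log_one_add_card_filter_mem_le N
  rw [hsize N hN hk] at hle
  have hdisj := (sum_log_one_add_card_filter_mem_eq_iff N).1 (by rw [hsize N hN hk]; linarith)
  exact fun S hS S' hS' => hdisj hS hS'

/-- Correctness of the reduction from Exact Regular Set Packing: for a family
`𝒮` of `τ`-element subsets of `{1,…,n}` and `u_ℓ(N) = |{S ∈ N : ℓ ∈ S}|`,
there is a size-`k` subfamily `N` with `∑ ℓ, log (1 + u_ℓ(N)) ≥ τ k log 2`
iff there is a size-`k` pairwise disjoint subfamily; moreover any such
pairwise disjoint subfamily attains the value `τ k log 2` exactly. -/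
theorem set_packing_reduction (n k τ : ℕ) (hn : 1 ≤ n) (hk : 1 ≤ k)
    (hτ : 1 ≤ τ)
    (𝒮 : Finset (Finset (Fin n)))
    (hτcard : ∀ S ∈ 𝒮, S.card = τ) :
    ((∃ N ⊆ 𝒮, N.card = k ∧
        ((τ : ℝ) * k) * Real.log 2 ≤
          ∑ ℓ : Fin n,
            Real.log (1 + ((N.filter (fun S => ℓ ∈ S)).card : ℝ))) ↔
      (∃ I ⊆ 𝒮, I.card = k ∧
        ∀ S ∈ I, ∀ S' ∈ I, S ≠ S' → Disjoint S S')) ∧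
    (∀ I ⊆ 𝒮, I.card = k → (∀ S ∈ I, ∀ S' ∈ I, S ≠ S' → Disjoint S S') →
      ∑ ℓ : Fin n, Real.log (1 + ((I.filter (fun S => ℓ ∈ S)).card : ℝ)) =
        ((τ : ℝ) * k) * Real.log 2) :=
  set_packing_reduction_general n k τ 𝒮 hτcard
end

section
/- Let u_1, …, u_c be nonnegative reals with ∑_{ℓ=1}^c u_ℓ = a > 0, and suppose the number of indices ℓ with u_ℓ > 0 is at most a. Then ∑_{ℓ=1}^c log(1 + u_ℓ) ≤ a · log 2, and equality holds if and only if every u_ℓ belongs to {0, 1} (in which case exactly a of them equal 1). -/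
lemma log_tangent {u : ℝ} (hu : 0 ≤ u) :
    Real.log (1 + u) ≤ Real.log 2 + (u - 1) / 2 := by
  have h1 : (0:ℝ) < (1 + u) / 2 := by linarith
  have h2 := Real.log_le_sub_one_of_pos h1
  have h3 : Real.log ((1 + u) / 2) = Real.log (1 + u) - Real.log 2 := by
    rw [Real.log_div (by linarith) (by norm_num)]
  linarith

lemma log_tangent_strict {u : ℝ} (hu : 0 ≤ u) (hne : u ≠ 1) :
    Real.log (1 + u) < Real.log 2 + (u - 1) / 2 := by
  have h1 : (0:ℝ) < (1 + u) / 2 := by linarith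
  have h2 := Real.log_lt_sub_one_of_pos h1 (by
    intro h
    exact hne (by linarith [h, (div_eq_one_iff_eq (by norm_num : (2:ℝ) ≠ 0)).mp h]))
  have h3 : Real.log ((1 + u) / 2) = Real.log (1 + u) - Real.log 2 := by
    rw [Real.log_div (by linarith) (by norm_num)]
  linarith

/-- Analytic core of the reverse direction of the NP-hardness reduction:
if nonnegative reals `u₁,…,u_c` sum to `a > 0` and at most `a` of them are
positive, then `∑ ℓ, log (1 + u ℓ) ≤ a log 2`, with equality iff every `u ℓ`
is 0 or 1 (in which case exactly `a` of them equal 1). -/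
theorem sum_log_le_of_support_small (c : ℕ) (u : Fin c → ℝ)
    (hu : ∀ ℓ, 0 ≤ u ℓ)
    (a : ℝ) (ha : 0 < a) (hsum : ∑ ℓ, u ℓ = a)
    (hcount : (({ℓ : Fin c | 0 < u ℓ} : Set (Fin c)).ncard : ℝ) ≤ a) :
    (∑ ℓ, Real.log (1 + u ℓ) ≤ a * Real.log 2) ∧
      ((∑ ℓ, Real.log (1 + u ℓ) = a * Real.log 2) ↔
        ∀ ℓ, u ℓ = 0 ∨ u ℓ = 1) ∧
      ((∀ ℓ, u ℓ = 0 ∨ u ℓ = 1) →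
        (({ℓ : Fin c | u ℓ = 1} : Set (Fin c)).ncard : ℝ) = a) := by
  classical
  set s : Finset (Fin c) := Finset.univ.filter (fun ℓ => 0 < u ℓ) with hs
  have hset : ({ℓ : Fin c | 0 < u ℓ} : Set (Fin c)) = ↑s := by
    ext ℓ; simp [hs]
  rw [hset, Set.ncard_coe_finset] at hcount
  have hzero : ∀ ℓ, ℓ ∉ s → u ℓ = 0 := by
    intro ℓ hℓ
    have : ¬ 0 < u ℓ := by simpa [hs] using hℓ
    linarith [hu ℓ]
  have hsum_s : ∑ ℓ ∈ s, u ℓ = a := by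
    rw [← hsum]
    exact Finset.sum_subset (Finset.subset_univ s) (fun x _ hx => hzero x hx)
  have hf_s : ∑ ℓ, Real.log (1 + u ℓ) = ∑ ℓ ∈ s, Real.log (1 + u ℓ) := by
    symm
    refine Finset.sum_subset (Finset.subset_univ s) ?_
    intro x _ hx
    simp [hzero x hx]
  have hlog2 : (1:ℝ)/2 < Real.log 2 := by
    have := Real.log_two_gt_d9; linarith
  have hbound : ∑ ℓ ∈ s, (Real.log 2 + (u ℓ - 1)/2) ≤ a * Real.log 2 := by
    have : ∑ ℓ ∈ s, (Real.log 2 + (u ℓ - 1)/2)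
        = s.card * Real.log 2 + (a - s.card)/2 := by
      rw [Finset.sum_add_distrib, Finset.sum_const, nsmul_eq_mul]
      rw [← Finset.sum_div, Finset.sum_sub_distrib, hsum_s, Finset.sum_const,
        nsmul_eq_mul, mul_one]
    rw [this]
    nlinarith [hcount, hlog2]
  have hle : ∑ ℓ, Real.log (1 + u ℓ) ≤ a * Real.log 2 := by
    rw [hf_s]
    calc ∑ ℓ ∈ s, Real.log (1 + u ℓ)
        ≤ ∑ ℓ ∈ s, (Real.log 2 + (u ℓ - 1)/2) :=
          Finset.sum_le_sum (fun i _ => log_tangent (hu i))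
      _ ≤ a * Real.log 2 := hbound
  have hmpr : (∀ ℓ, u ℓ = 0 ∨ u ℓ = 1) → ∑ ℓ, Real.log (1 + u ℓ) = a * Real.log 2 := by
    intro h
    have : ∀ ℓ : Fin c, Real.log (1 + u ℓ) = u ℓ * Real.log 2 := by
      intro ℓ
      rcases h ℓ with h0 | h1
      · simp [h0]
      · norm_num [h1]
    calc ∑ ℓ, Real.log (1 + u ℓ) = ∑ ℓ, u ℓ * Real.log 2 := by
          exact Finset.sum_congr rfl (fun ℓ _ => this ℓ)
      _ = (∑ ℓ, u ℓ) * Real.log 2 := by rw [Finset.sum_mul]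
      _ = a * Real.log 2 := by rw [hsum]
  refine ⟨hle, ⟨?_, hmpr⟩, ?_⟩
  · intro heq
    by_contra hcon
    push_neg at hcon
    obtain ⟨ℓ₀, h0, h1⟩ := hcon
    have hℓ₀ : ℓ₀ ∈ s := by
      simp only [hs, Finset.mem_filter, Finset.mem_univ, true_and]
      exact lt_of_le_of_ne (hu ℓ₀) (Ne.symm h0)
    have hstrict : ∑ ℓ ∈ s, Real.log (1 + u ℓ)
        < ∑ ℓ ∈ s, (Real.log 2 + (u ℓ - 1)/2) := by
      refine Finset.sum_lt_sum (fun i _ => log_tangent (hu i)) ?_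
      exact ⟨ℓ₀, hℓ₀, log_tangent_strict (hu ℓ₀) h1⟩
    rw [hf_s] at heq
    linarith
  · intro h
    set t : Finset (Fin c) := Finset.univ.filter (fun ℓ => u ℓ = 1) with ht
    have hset1 : ({ℓ : Fin c | u ℓ = 1} : Set (Fin c)) = ↑t := by
      ext ℓ; simp [ht]
    rw [hset1, Set.ncard_coe_finset]
    have : ∑ ℓ, u ℓ = (t.card : ℝ) := by
      rw [← Finset.sum_subset (Finset.subset_univ t) (fun x _ hx => ?_)]
      · have : ∀ ℓ ∈ t, u ℓ = 1 := by intro ℓ hℓ; simpa [ht] using hℓ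
        rw [Finset.sum_congr rfl this, Finset.sum_const, nsmul_eq_mul, mul_one]
      · rcases h x with h0 | h1
        · exact h0
        · exact absurd (by simp [ht, h1]) hx
    rw [← hsum, this]
end

section
/- Let p < 0, η > 0, and let a_1 ≥ a_2 ≥ … ≥ a_k ≥ 0 be a nonincreasing sequence of nonnegative reals. Define F(i) = (η + ∑_{j=1}^{i} a_j)^p for 0 ≤ i ≤ k. Then the marginal gains are nondecreasing: for all indices 1 ≤ i' < i ≤ k, F(i') − F(i'−1) ≤ F(i) − F(i−1). -/
/-! For `p ≤ 0` the map `x ↦ x ^ p` is antitone and convex on `(0, ∞)`. Replacing the increment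
`a i'` by the smaller `a i` can only raise the marginal `F i' - F (i' - 1)` (antitonicity), and
moving that increment from the base `η + ∑_{j < i'} a j` to the larger base `η + ∑_{j < i} a j`
raises it again (convexity). -/

open Real Set Finset

theorem ConvexOn.map_add_sub_map_le {𝕜 : Type*} [Field 𝕜] [LinearOrder 𝕜] [IsStrictOrderedRing 𝕜]
    {D : Set 𝕜} {f : 𝕜 → 𝕜} (hf : ConvexOn 𝕜 D f) {s t u : 𝕜} (hs : s ∈ D) (htu : t + u ∈ D)
    (hst : s ≤ t) (hu : 0 ≤ u) : f (s + u) - f s ≤ f (t + u) - f t := by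
  rcases (show 0 ≤ t + u - s by linarith).eq_or_lt with hL | hL
  · obtain rfl : t = s := by linarith
    obtain rfl : u = 0 := by linarith
    rfl
  -- `s + u` and `t` are convex combinations of `s` and `t + u` with swapped weights.
  have hw : (t - s) / (t + u - s) + u / (t + u - s) = 1 := by field_simp; ring
  have h₁ := hf.2 hs htu (div_nonneg (sub_nonneg.2 hst) hL.le) (div_nonneg hu hL.le) hw
  have h₂ := hf.2 hs htu (div_nonneg hu hL.le) (div_nonneg (sub_nonneg.2 hst) hL.le)
    (by rwa [add_comm])
  simp only [smul_eq_mul] at h₁ h₂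
  have e₁ : (t - s) / (t + u - s) * s + u / (t + u - s) * (t + u) = s + u := by
    field_simp; ring
  have e₂ : u / (t + u - s) * s + (t - s) / (t + u - s) * (t + u) = t := by
    field_simp; ring
  rw [e₁] at h₁
  rw [e₂] at h₂
  linear_combination h₁ + h₂ + (f s + f (t + u)) * hw

theorem convexOn_rpow_of_nonpos {p : ℝ} (hp : p ≤ 0) : ConvexOn ℝ (Ioi 0) fun x : ℝ ↦ x ^ p := by
  have hdiff : DifferentiableOn ℝ (fun x : ℝ ↦ x ^ p) (Ioi 0) := fun x hx ↦
    (hasDerivAt_rpow_const (Or.inl (ne_of_gt hx))).differentiableAt.differentiableWithinAt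
  refine MonotoneOn.convexOn_of_deriv (convex_Ioi 0) hdiff.continuousOn
    (by rwa [interior_Ioi]) ?_
  rw [interior_Ioi, deriv_rpow_const']
  intro x hx y _ hxy
  exact mul_le_mul_of_nonpos_left (rpow_le_rpow_of_nonpos hx hxy (by linarith)) hp

/-- Increasing marginals for the `p`-mean welfare objective with `p < 0`:
for a nonincreasing sequence `a 1 ≥ … ≥ a k ≥ 0` and `η > 0`, the function
`F i = (η + ∑_{j=1}^i a j) ^ p` has nondecreasing marginal gains. -/
theorem pmean_increasing_marginals_neg (p : ℝ) (hp : p < 0)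
    (k : ℕ) (η : ℝ) (hη : 0 < η)
    (a : ℕ → ℝ)
    (hnn : ∀ j, 1 ≤ j → j ≤ k → 0 ≤ a j)
    (hanti : ∀ i j, 1 ≤ i → i ≤ j → j ≤ k → a j ≤ a i)
    (F : ℕ → ℝ)
    (hF : ∀ i, i ≤ k → F i = (η + ∑ j ∈ Finset.Icc 1 i, a j) ^ p) :
    ∀ i' i, 1 ≤ i' → i' < i → i ≤ k →
      F i' - F (i' - 1) ≤ F i - F (i - 1) := by
  intro i' i hi' hlt hik
  obtain ⟨m', rfl⟩ : ∃ m, i' = m + 1 := ⟨i' - 1, by omega⟩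
  obtain ⟨m, rfl⟩ : ∃ m, i = m + 1 := ⟨i - 1, by omega⟩
  rw [Nat.add_sub_cancel, Nat.add_sub_cancel, hF _ (by omega), hF m' (by omega), hF _ hik,
    hF m (by omega), sum_Icc_succ_top (by omega), sum_Icc_succ_top (by omega), ← add_assoc,
    ← add_assoc]
  have hS_nonneg : 0 ≤ ∑ j ∈ Icc 1 m', a j :=
    sum_nonneg fun j hj ↦ hnn j (mem_Icc.1 hj).1 (by grind)
  have hS_mono : ∑ j ∈ Icc 1 m', a j ≤ ∑ j ∈ Icc 1 m, a j :=
    sum_le_sum_of_subset_of_nonneg (Icc_subset_Icc_right (by omega))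
      fun j hj _ ↦ hnn j (mem_Icc.1 hj).1 (by grind)
  have ha_nonneg : 0 ≤ a (m + 1) := hnn _ (by omega) hik
  have ha_le : a (m + 1) ≤ a (m' + 1) := hanti _ _ (by omega) (by omega) hik
  calc _ ≤ (η + ∑ j ∈ Icc 1 m', a j + a (m + 1)) ^ p - (η + ∑ j ∈ Icc 1 m', a j) ^ p := by
        gcongr ?_ - _
        exact rpow_le_rpow_of_nonpos (by linarith) (by linarith) hp.le
    _ ≤ _ := (convexOn_rpow_of_nonpos hp.le).map_add_sub_map_le (mem_Ioi.2 (by linarith))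
        (mem_Ioi.2 (by linarith)) (by gcongr) ha_nonneg
end
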